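/- arXiv:math/0110036 — 6 statements merged into one kernel-verified Lean document; each statement's English description precedes it below -/
import Mathlib

section
/- The number of permutations of $\{1,\dots,n\}$ avoiding the generalized pattern $1\text{-}23$ equals the $n$th Bell number $B_n$. -/
/-- The `n`th Bell number: the number of set partitions of an `n`-element set. -/
def bell (n : ℕ) : ℕ := Fintype.card (Finpartition (Finset.univ : Finset (Fin n)))

/-- Number of occurrences of the generalized pattern `1-23` in a permutation of `Fin n`:
triples of positions `i < j, j+1` with `π i < π j < π (j+1)`. -/
def occ_1_23 (n : ℕ) (π : Equiv.Perm (Fin n)) : ℕ :=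
  ((Finset.univ : Finset (Fin n × Fin n × Fin n)).filter
    (fun p => p.1 < p.2.1 ∧ (p.2.2 : ℕ) = (p.2.1 : ℕ) + 1 ∧
      π p.1 < π p.2.1 ∧ π p.2.1 < π p.2.2)).card

open Finset

namespace Avoid123

variable {n : ℕ}

/-- "min functions": idempotent, pointwise-decreasing. These encode set partitions
(f x = min of the block of x). -/
def Good (f : Fin n → Fin n) : Prop := (∀ x, f x ≤ x) ∧ (∀ x, f (f x) = f x)

instance : DecidablePred (Good (n := n)) := fun _ => by unfold Good; infer_instance

/-- running minimum of a permutation up to position p -/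
def rmin (π : Equiv.Perm (Fin n)) (p : Fin n) : Fin n :=
  ((Finset.Iic p).image π).min' ⟨π p, Finset.mem_image_of_mem _ (Finset.mem_Iic.2 le_rfl)⟩

lemma rmin_le {π : Equiv.Perm (Fin n)} {i p : Fin n} (h : i ≤ p) : rmin π p ≤ π i :=
  Finset.min'_le _ _ (Finset.mem_image_of_mem _ (Finset.mem_Iic.2 h))

lemma exists_rmin (π : Equiv.Perm (Fin n)) (p : Fin n) : ∃ i ≤ p, π i = rmin π p := by
  have := Finset.min'_mem ((Finset.Iic p).image π)
    ⟨π p, Finset.mem_image_of_mem _ (Finset.mem_Iic.2 le_rfl)⟩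
  rw [Finset.mem_image] at this
  obtain ⟨i, hi, hi'⟩ := this
  exact ⟨i, Finset.mem_Iic.1 hi, hi'⟩

lemma rmin_anti {π : Equiv.Perm (Fin n)} {p q : Fin n} (h : p ≤ q) : rmin π q ≤ rmin π p := by
  obtain ⟨i, hip, hi⟩ := exists_rmin π p
  rw [← hi]
  exact rmin_le (hip.trans h)

/-- the min-function associated to a permutation -/
def F (π : Equiv.Perm (Fin n)) : Fin n → Fin n := fun x => rmin π (π.symm x)

lemma F_apply (π : Equiv.Perm (Fin n)) (p : Fin n) : F π (π p) = rmin π p := by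
  simp [F]

lemma goodF (π : Equiv.Perm (Fin n)) : Good (F π) := by
  constructor
  · intro x
    have := rmin_le (π := π) (i := π.symm x) le_rfl
    simpa [F] using this
  · intro x
    obtain ⟨i, hip, hi⟩ := exists_rmin π (π.symm x)
    have h1 : F π x = rmin π (π.symm x) := rfl
    have h2 : π.symm (F π x) = i := by rw [h1, ← hi, Equiv.symm_apply_apply]
    show rmin π (π.symm (F π x)) = F π x
    rw [h2]
    refine le_antisymm ?_ ?_
    · rw [h1, ← hi]; exact rmin_le le_rfl
    · rw [h1]; exact rmin_anti hip

/-- sorting key: blocks in decreasing order of min; within a block the min first,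
then the rest decreasing. -/
def key (f : Fin n → Fin n) (x : Fin n) : ℕ ×ₗ ℕ :=
  toLex (n - 1 - (f x : ℕ), if f x = x then 0 else n - (x : ℕ))

lemma key_inj (f : Fin n → Fin n) : Function.Injective (key f) := by
  intro x y h
  rw [key, key] at h
  have h1 : n - 1 - (f x : ℕ) = n - 1 - (f y : ℕ) := congrArg (·.1) (toLex.injective h)
  have h2 : (if f x = x then 0 else n - (x : ℕ)) = (if f y = y then 0 else n - (y : ℕ)) :=
    congrArg (·.2) (toLex.injective h)
  have hfx := (f x).isLt; have hfy := (f y).isLt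
  have hfe : f x = f y := Fin.ext (by omega)
  have hx := x.isLt; have hy := y.isLt
  by_cases e1 : f x = x <;> by_cases e2 : f y = y <;> simp [e1, e2] at h2
  · rw [← e1, ← e2, hfe]
  · omega
  · omega
  · exact Fin.ext (by omega)

lemma key_lt_cases {f : Fin n → Fin n} {x y : Fin n} (h : key f x < key f y) :
    f y < f x ∨ (f x = f y ∧ f x = x ∧ f y ≠ y) ∨ (f x = f y ∧ f x ≠ x ∧ f y ≠ y ∧ y < x) := by
  rw [key, key, Prod.Lex.lt_iff] at h
  simp only [ofLex_toLex] at h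
  have hfx := (f x).isLt; have hfy := (f y).isLt
  have hx := x.isLt; have hy := y.isLt
  rcases h with h | ⟨h1, h2⟩
  · left; exact Fin.lt_def.2 (by omega)
  · have hfe : f x = f y := Fin.ext (by omega)
    by_cases e1 : f x = x <;> by_cases e2 : f y = y <;> simp [e1, e2] at h2
    · exact Or.inr (Or.inl ⟨hfe, e1, e2⟩)
    · exact Or.inr (Or.inr ⟨hfe, e1, e2, Fin.lt_def.2 (by omega)⟩)

lemma key_le_fst {f : Fin n → Fin n} {x y : Fin n} (h : key f x ≤ key f y) : f y ≤ f x := by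
  rw [key, key, Prod.Lex.le_iff] at h
  simp only [ofLex_toLex] at h
  have hfx := (f x).isLt; have hfy := (f y).isLt
  rcases h with h | ⟨h, _⟩ <;> exact Fin.le_def.2 (by omega)

lemma key_min_le {f : Fin n → Fin n} (hf : Good f) (x : Fin n) : key f (f x) ≤ key f x := by
  rw [key, key, Prod.Lex.le_iff, hf.2 x]
  by_cases e : f x = x
  · right; simp [e]
  · right; refine ⟨rfl, ?_⟩; simp [e]

lemma avoids_iff (π : Equiv.Perm (Fin n)) :
    occ_1_23 n π = 0 ↔ ∀ i j j' : Fin n, i < j → (j' : ℕ) = (j : ℕ) + 1 →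
      π i < π j → π j < π j' → False := by
  rw [occ_1_23, Finset.card_eq_zero, Finset.filter_eq_empty_iff]
  constructor
  · intro h i j j' hij hj' h1 h2
    exact h (Finset.mem_univ (i, j, j')) ⟨hij, hj', h1, h2⟩
  · rintro h ⟨i, j, j'⟩ - ⟨hij, hj', h1, h2⟩
    exact h i j j' hij hj' h1 h2

lemma exists_ascent (π : Equiv.Perm (Fin n)) {p q : Fin n} (hpq : p ≤ q) (h : π p < π q) :
    ∃ k k' : Fin n, p ≤ k ∧ k' ≤ q ∧ (k' : ℕ) = (k : ℕ) + 1 ∧ π k < π k' := by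
  by_contra hc
  push_neg at hc
  have key : ∀ d : ℕ, ∀ hd : (p : ℕ) + d ≤ (q : ℕ),
      π ⟨(p : ℕ) + d, by have := q.isLt; omega⟩ ≤ π p := by
    intro d
    induction d with
    | zero => intro _; exact le_of_eq (congrArg π (Fin.ext (by simp)))
    | succ d ih =>
      intro hd
      have hd' : (p : ℕ) + d ≤ (q : ℕ) := by omega
      set k : Fin n := ⟨(p : ℕ) + d, by omega⟩ with hk
      set k' : Fin n := ⟨(p : ℕ) + d + 1, by omega⟩ with hk'
      have h1 : p ≤ k := Fin.le_def.2 (by simp [hk])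
      have h2 : k' ≤ q := Fin.le_def.2 (by simp [hk']; omega)
      have h3 : π k' ≤ π k := hc k k' h1 h2 (by simp [hk, hk'])
      have h4 : (⟨(p : ℕ) + (d + 1), by have := q.isLt; omega⟩ : Fin n) = k' :=
        Fin.ext (by simp [hk']; omega)
      rw [h4]
      exact le_trans h3 (ih hd')
  have hq : (p : ℕ) ≤ (q : ℕ) := Fin.le_def.1 hpq
  have := key ((q : ℕ) - (p : ℕ)) (by omega)
  have he : (⟨(p : ℕ) + ((q : ℕ) - (p : ℕ)), by have := q.isLt; omega⟩ : Fin n) = q :=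
    Fin.ext (by simp; omega)
  rw [he] at this
  exact absurd h (not_lt.2 this)

lemma exists_earlier_smaller {π : Equiv.Perm (Fin n)} {k : Fin n} (h : π k ≠ rmin π k) :
    ∃ i : Fin n, i < k ∧ π i < π k := by
  obtain ⟨i, hik, hi⟩ := exists_rmin π k
  have h1 : rmin π k ≤ π k := rmin_le le_rfl
  have h2 : rmin π k < π k := lt_of_le_of_ne h1 (fun e => h e.symm)
  refine ⟨i, ?_, hi ▸ h2⟩
  rcases lt_or_eq_of_le hik with h' | h'
  · exact h'
  · exact absurd (congrArg π h') (by rw [hi]; exact h2.ne)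

/-- the permutation associated to a min-function: sort by `key`. -/
def G (f : Fin n → Fin n) : Equiv.Perm (Fin n) := Tuple.sort (key f)

lemma G_strictMono {f : Fin n → Fin n} (_hf : Good f) :
    StrictMono (key f ∘ (G f : Equiv.Perm (Fin n))) :=
  (Tuple.monotone_sort (key f)).strictMono_of_injective
    ((key_inj f).comp (Equiv.injective _))

lemma G_lt_iff {f : Fin n → Fin n} (hf : Good f) {p q : Fin n} :
    key f (G f p) < key f (G f q) ↔ p < q :=
  (G_strictMono hf).lt_iff_lt

lemma G_le_iff {f : Fin n → Fin n} (hf : Good f) {p q : Fin n} :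
    key f (G f p) ≤ key f (G f q) ↔ p ≤ q :=
  (G_strictMono hf).le_iff_le

lemma G_avoids {f : Fin n → Fin n} (hf : Good f) : occ_1_23 n (G f) = 0 := by
  rw [avoids_iff]
  intro i j j' hij hj' hab hbc
  set π := G f with hπ
  -- notation
  have hbc' : key f (π j) < key f (π j') := (G_lt_iff hf).2 (Fin.lt_def.2 (by omega))
  have hab' : key f (π i) < key f (π j) := (G_lt_iff hf).2 hij
  rcases key_lt_cases hbc' with h | ⟨hfe, hb, hc⟩ | ⟨hfe, hb, hc, hlt⟩
  · -- f c < f b : the block-min of c sits strictly between positions j and j+1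
    set m := f (π j') with hm
    have hmm : f m = m := hf.2 (π j')
    by_cases hmc : m = π j'
    · -- then π j' = f (π j') ≤ f (π j) ≤ π j, contradicting π j < π j'
      have : f (π j) ≤ π j := hf.1 (π j)
      rw [← hmc] at hbc
      exact absurd (lt_trans hbc h) (not_lt.2 this)
    · have h1 : key f (π j) < key f m := by
        rw [key, key, Prod.Lex.lt_iff]
        left
        have := (f (π j)).isLt; have := (f m).isLt
        have hlt2 : f m < f (π j) := by rw [hmm]; exact h
        simp only [ofLex_toLex]
        have := Fin.lt_def.1 hlt2
        omega
      have h2 : key f m < key f (π j') := by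
        refine lt_of_le_of_ne (key_min_le hf (π j')) ?_
        intro e
        exact hmc (key_inj f e)
      -- positions
      have p1 : j < π.symm m := by
        have := (G_lt_iff hf (p := j) (q := π.symm m)).1
        rw [Equiv.apply_symm_apply] at this
        exact this h1
      have p2 : π.symm m < j' := by
        have := (G_lt_iff hf (p := π.symm m) (q := j')).1
        rw [Equiv.apply_symm_apply] at this
        exact this h2
      have := Fin.lt_def.1 p1; have := Fin.lt_def.1 p2
      omega
  · -- f b = f c, b is its block min: then look at a
    rcases key_lt_cases hab' with h | ⟨hfe2, ha, hb2⟩ | ⟨hfe2, ha, hb2, hlt2⟩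
    · -- f b < f a : a ≥ f a > f b = b contradicts a < b
      have h1 : f (π i) ≤ π i := hf.1 (π i)
      have h2 : f (π j) = π j := hb
      have := Fin.lt_def.1 h; have := Fin.le_def.1 h1
      have := Fin.lt_def.1 hab
      have e2 := congrArg Fin.val h2
      omega
    · exact hb2 hb
    · exact hb2 hb
  · exact absurd hbc (not_lt.2 (le_of_lt hlt))

lemma F_G {f : Fin n → Fin n} (hf : Good f) : F (G f) = f := by
  funext x
  set π := G f with hπ
  show rmin π (π.symm x) = f x
  have hxx : π (π.symm x) = x := Equiv.apply_symm_apply _ _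
  refine le_antisymm ?_ ?_
  · -- f x is attained: its position is ≤ π.symm x
    have h1 : key f (f x) ≤ key f x := key_min_le hf x
    have h2 : π.symm (f x) ≤ π.symm x := by
      have := (G_le_iff hf (p := π.symm (f x)) (q := π.symm x)).1
      rw [Equiv.apply_symm_apply, Equiv.apply_symm_apply] at this
      exact this h1
    have := rmin_le (π := π) (p := π.symm x) h2
    rw [Equiv.apply_symm_apply] at this
    exact this
  · -- every value in the prefix is ≥ f x
    obtain ⟨i, hip, hi⟩ := exists_rmin π (π.symm x)
    rw [← hi]
    have h1 : key f (π i) ≤ key f x := by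
      rw [← hxx]
      exact (G_le_iff hf).2 hip
    exact le_trans (key_le_fst h1) (hf.1 (π i))

lemma G_F {π : Equiv.Perm (Fin n)} (hπ : occ_1_23 n π = 0) : G (F π) = π := by
  rw [avoids_iff] at hπ
  symm
  rw [G, Tuple.eq_sort_iff]
  constructor
  · -- monotone
    intro p q hpq
    rcases eq_or_lt_of_le hpq with rfl | hpq
    · exact le_rfl
    have hr : rmin π q ≤ rmin π p := rmin_anti hpq.le
    simp only [Function.comp_apply, key, F_apply]
    rcases lt_or_eq_of_le hr with hlt | heq
    · rw [Prod.Lex.le_iff]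
      left
      have := (rmin π p).isLt; have := (rmin π q).isLt
      have := Fin.lt_def.1 hlt
      simp only [ofLex_toLex]
      omega
    · rw [Prod.Lex.le_iff]
      right
      refine ⟨by rw [heq]; rfl, ?_⟩
      simp only [ofLex_toLex]
      by_cases hp : rmin π p = π p
      · simp [hp]
      · have hq : rmin π q ≠ π q := by
          intro hq
          obtain ⟨i, hipp, hi⟩ := exists_rmin π p
          have : π i = π q := by rw [hi, ← heq, hq]
          have : i = q := π.injective this
          subst this
          exact absurd (le_trans hipp hpq.le) (not_le.2 (lt_of_le_of_lt hipp hpq))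
        simp only [hp, hq, if_false]
        -- need π q ≤ π p
        by_contra hcon
        push_neg at hcon
        have hppq : π p < π q := by
          rcases lt_or_ge (π p) (π q) with h | h
          · exact h
          · exfalso
            have := (π p).isLt; have := (π q).isLt
            have := Fin.le_def.1 h
            omega
        obtain ⟨k, k', hpk, hk'q, hkk', hasc⟩ := exists_ascent π hpq.le hppq
        -- rmin π k = rmin π p
        have hk1 : rmin π k ≤ rmin π p := rmin_anti hpk
        have hk2 : rmin π q ≤ rmin π k := by
          refine rmin_anti ?_
          have := Fin.le_def.1 hk'q
          exact Fin.le_def.2 (by omega)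
        have hkeq : rmin π k = rmin π p := le_antisymm hk1 (heq ▸ hk2)
        have hknot : π k ≠ rmin π k := by
          intro e
          obtain ⟨i, hipp, hi⟩ := exists_rmin π p
          have hik : i = k := π.injective (hi.trans (hkeq.symm.trans e.symm))
          rw [hik] at hipp
          have hpkk : p = k := le_antisymm hpk hipp
          exact hp ((hkeq.symm.trans e.symm).trans (congrArg π hpkk.symm))
        obtain ⟨i, hik, hismall⟩ := exists_earlier_smaller hknot
        exact hπ i k k' hik hkk' hismall hasc
  · -- injectivity tie-breaker
    intro p q hpq hkey
    have : π p = π q := by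
      have := key_inj (F π) hkey
      exact this
    exact absurd (π.injective this) (ne_of_lt hpq)

/-- a finpartition is determined by its `part` function -/
lemma part_ext {α : Type*} [DecidableEq α] {s : Finset α} (P Q : Finpartition s)
    (h : ∀ a ∈ s, P.part a = Q.part a) : P = Q := by
  apply Finpartition.ext
  apply Finset.ext
  intro t
  constructor
  · intro ht
    obtain ⟨a, hat⟩ := P.nonempty_of_mem_parts ht
    have has : a ∈ s := P.le ht hat
    rw [← P.part_eq_of_mem ht hat, h a has]
    exact Q.part_mem.2 has
  · intro ht
    obtain ⟨a, hat⟩ := Q.nonempty_of_mem_parts ht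
    have has : a ∈ s := Q.le ht hat
    rw [← Q.part_eq_of_mem ht hat, ← h a has]
    exact P.part_mem.2 has

lemma min'_congr {α : Type*} [LinearOrder α] {s t : Finset α} (h : s = t)
    (hs : s.Nonempty) (ht : t.Nonempty) : s.min' hs = t.min' ht := by subst h; rfl

instance kerDec (f : Fin n → Fin n) : DecidableRel (Setoid.ker f).r :=
  fun a b => inferInstanceAs (Decidable (f a = f b))

def toMin (P : Finpartition (Finset.univ : Finset (Fin n))) (x : Fin n) : Fin n :=
  (P.part x).min' ⟨x, P.mem_part (mem_univ x)⟩

lemma toMin_mem (P : Finpartition (Finset.univ : Finset (Fin n))) (x : Fin n) :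
    toMin P x ∈ P.part x := Finset.min'_mem _ _

lemma toMin_le (P : Finpartition (Finset.univ : Finset (Fin n))) {x b : Fin n}
    (hb : b ∈ P.part x) : toMin P x ≤ b := Finset.min'_le _ _ hb

lemma toMin_good (P : Finpartition (Finset.univ : Finset (Fin n))) : Good (toMin P) := by
  constructor
  · intro x
    exact toMin_le P (P.mem_part (mem_univ x))
  · intro x
    have hpp : P.part (toMin P x) = P.part x :=
      (P.mem_part_iff_part_eq_part (mem_univ _) (mem_univ _)).1 (toMin_mem P x)
    exact min'_congr hpp _ _

lemma toMin_eq_iff (P : Finpartition (Finset.univ : Finset (Fin n))) {a b : Fin n} :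
    toMin P a = toMin P b ↔ b ∈ P.part a := by
  constructor
  · intro h
    have h1 := toMin_mem P a
    have h2 := toMin_mem P b
    rw [h] at h1
    have : P.part a = P.part b :=
      P.eq_of_mem_parts (P.part_mem.2 (mem_univ a)) (P.part_mem.2 (mem_univ b)) h1 h2
    rw [this]
    exact P.mem_part (mem_univ b)
  · intro h
    have : P.part b = P.part a := (P.mem_part_iff_part_eq_part (mem_univ b) (mem_univ a)).1 h
    exact min'_congr this.symm _ _

/-- partitions of `Fin n` are in bijection with min-functions -/
noncomputable def partEquiv (n : ℕ) :
    Finpartition (Finset.univ : Finset (Fin n)) ≃ {f : Fin n → Fin n // Good f} where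
  toFun P := ⟨toMin P, toMin_good P⟩
  invFun f := Finpartition.ofSetoid (Setoid.ker f.1)
  left_inv P := by
    apply part_ext
    intro a _
    apply Finset.ext
    intro b
    rw [Finpartition.mem_part_ofSetoid_iff_rel, Setoid.ker_def]
    exact toMin_eq_iff P
  right_inv f := by
    apply Subtype.ext
    funext x
    show toMin (Finpartition.ofSetoid (Setoid.ker f.1)) x = f.1 x
    set Q := Finpartition.ofSetoid (Setoid.ker f.1) with hQ
    refine le_antisymm (toMin_le Q ?_) ?_
    · rw [hQ, Finpartition.mem_part_ofSetoid_iff_rel, Setoid.ker_def]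
      exact (f.2.2 x).symm
    · have hm := toMin_mem Q x
      rw [hQ, Finpartition.mem_part_ofSetoid_iff_rel, Setoid.ker_def] at hm
      rw [hm]
      exact f.2.1 _

/-- avoiding permutations are in bijection with min-functions -/
noncomputable def permEquiv (n : ℕ) :
    {π : Equiv.Perm (Fin n) // occ_1_23 n π = 0} ≃ {f : Fin n → Fin n // Good f} where
  toFun π := ⟨F π.1, goodF π.1⟩
  invFun f := ⟨G f.1, G_avoids f.2⟩
  left_inv π := Subtype.ext (G_F π.2)
  right_inv f := Subtype.ext (F_G f.2)

end Avoid123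

theorem avoiding_1_23_eq_bell (n : ℕ) :
    ((Finset.univ : Finset (Equiv.Perm (Fin n))).filter
      (fun π => occ_1_23 n π = 0)).card = bell n := by
  rw [bell]
  rw [← Fintype.card_subtype]
  rw [Fintype.card_congr (Avoid123.permEquiv n), Fintype.card_congr (Avoid123.partEquiv n)]
end

section
/- The number of permutations of $\{1,\dots,n\}$ avoiding the generalized pattern $1\text{-}32$ equals the $n$th Bell number $B_n$. -/
/-- Number of occurrences of the generalized pattern `1-32` in a permutation of `Fin n`:
triples of positions `i < j, j+1` with `π i < π (j+1) < π j`. -/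
def occ_1_32 (n : ℕ) (π : Equiv.Perm (Fin n)) : ℕ :=
  ((Finset.univ : Finset (Fin n × Fin n × Fin n)).filter
    (fun p => p.1 < p.2.1 ∧ (p.2.2 : ℕ) = (p.2.1 : ℕ) + 1 ∧
      π p.1 < π p.2.2 ∧ π p.2.2 < π p.2.1)).card

open List Finset


namespace Avoid132

variable {n : ℕ}

/-- head of an element: the minimum of its part. -/
def hd (P : Finpartition (Finset.univ : Finset (Fin n))) (v : Fin n) : Fin n :=
  (P.part v).min' ⟨v, P.mem_part (Finset.mem_univ v)⟩

/-- the order: first by head descending, then by value ascending. -/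
def ko (P : Finpartition (Finset.univ : Finset (Fin n))) (a b : Fin n) : Prop :=
  hd P b < hd P a ∨ (hd P a = hd P b ∧ a ≤ b)

instance (P : Finpartition (Finset.univ : Finset (Fin n))) : DecidableRel (ko P) := by
  unfold ko; infer_instance

lemma hd_mem (P : Finpartition (Finset.univ : Finset (Fin n))) (v : Fin n) :
    hd P v ∈ P.part v := Finset.min'_mem _ _

lemma hd_le (P : Finpartition (Finset.univ : Finset (Fin n))) (v : Fin n) :
    hd P v ≤ v := Finset.min'_le _ _ (P.mem_part (Finset.mem_univ v))

lemma part_hd (P : Finpartition (Finset.univ : Finset (Fin n))) (v : Fin n) :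
    P.part (hd P v) = P.part v :=
  P.part_eq_of_mem (P.part_mem.2 (Finset.mem_univ v)) (hd_mem P v)

lemma hd_eq_of_part_eq {P : Finpartition (Finset.univ : Finset (Fin n))} {a b : Fin n}
    (h : P.part a = P.part b) : hd P a = hd P b := by
  unfold hd; congr 1

lemma part_eq_of_hd_eq {P : Finpartition (Finset.univ : Finset (Fin n))} {a b : Fin n}
    (h : hd P a = hd P b) : P.part a = P.part b := by
  rw [← part_hd P a, h, part_hd]

lemma ko_total (P : Finpartition (Finset.univ : Finset (Fin n))) (a b : Fin n) :
    ko P a b ∨ ko P b a := by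
  unfold ko
  rcases lt_trichotomy (hd P a) (hd P b) with h | h | h
  · exact Or.inr (Or.inl h)
  · rcases le_total a b with h' | h'
    · exact Or.inl (Or.inr ⟨h, h'⟩)
    · exact Or.inr (Or.inr ⟨h.symm, h'⟩)
  · exact Or.inl (Or.inl h)

lemma ko_trans (P : Finpartition (Finset.univ : Finset (Fin n))) :
    ∀ a b c : Fin n, ko P a b → ko P b c → ko P a c := by
  intro a b c hab hbc
  rcases hab with h1 | ⟨h1, h1'⟩ <;> rcases hbc with h2 | ⟨h2, h2'⟩ <;> unfold ko
  · exact Or.inl (h2.trans h1)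
  · exact Or.inl (h2 ▸ h1)
  · exact Or.inl (h1 ▸ h2)
  · exact Or.inr ⟨h1.trans h2, h1'.trans h2'⟩

lemma ko_antisymm (P : Finpartition (Finset.univ : Finset (Fin n))) :
    ∀ a b : Fin n, ko P a b → ko P b a → a = b := by
  intro a b hab hba
  rcases hab with h1 | ⟨h1, h1'⟩ <;> rcases hba with h2 | ⟨h2, h2'⟩
  · exact absurd (h1.trans h2) (lt_irrefl _)
  · exact absurd h1 (h2 ▸ lt_irrefl _)
  · exact absurd h2 (h1 ▸ lt_irrefl _)
  · exact le_antisymm h1' h2'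

instance koTot (P : Finpartition (Finset.univ : Finset (Fin n))) : IsTotal (Fin n) (ko P) :=
  ⟨ko_total P⟩
instance koTrans (P : Finpartition (Finset.univ : Finset (Fin n))) : IsTrans (Fin n) (ko P) :=
  ⟨ko_trans P⟩
instance koAnti (P : Finpartition (Finset.univ : Finset (Fin n))) : IsAntisymm (Fin n) (ko P) :=
  ⟨ko_antisymm P⟩
instance koRefl (P : Finpartition (Finset.univ : Finset (Fin n))) : IsRefl (Fin n) (ko P) :=
  ⟨fun a => Or.inr ⟨rfl, le_refl a⟩⟩

lemma ko_hd_le {P : Finpartition (Finset.univ : Finset (Fin n))} {a b : Fin n}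
    (h : ko P a b) : hd P b ≤ hd P a := by
  rcases h with h | ⟨h, _⟩
  · exact h.le
  · exact h.ge

/-- the sorted list of values -/
def slist (P : Finpartition (Finset.univ : Finset (Fin n))) : List (Fin n) :=
  List.insertionSort (ko P) (List.finRange n)

lemma slist_perm (P : Finpartition (Finset.univ : Finset (Fin n))) :
    slist P ~ List.finRange n := List.perm_insertionSort _ _

lemma slist_length (P : Finpartition (Finset.univ : Finset (Fin n))) :
    (slist P).length = n := by
  rw [(slist_perm P).length_eq, List.length_finRange]

lemma slist_sorted (P : Finpartition (Finset.univ : Finset (Fin n))) :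
    (slist P).Pairwise (ko P) := List.pairwise_insertionSort _ _

lemma slist_nodup (P : Finpartition (Finset.univ : Finset (Fin n))) :
    (slist P).Nodup := (slist_perm P).nodup_iff.mpr (List.nodup_finRange n)

/-- the permutation associated to a partition -/
noncomputable def gperm (P : Finpartition (Finset.univ : Finset (Fin n))) : Equiv.Perm (Fin n) :=
  Equiv.ofBijective (fun k => (slist P).get (Fin.cast (slist_length P).symm k))
    (Finite.injective_iff_bijective.mp (fun i j hij => by
      have := (List.nodup_iff_injective_get.mp (slist_nodup P)) hij
      exact Fin.cast_injective _ this))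

lemma gperm_apply (P : Finpartition (Finset.univ : Finset (Fin n))) (k : Fin n) :
    gperm P k = (slist P).get (Fin.cast (slist_length P).symm k) := rfl

lemma gperm_ko {P : Finpartition (Finset.univ : Finset (Fin n))} {i j : Fin n}
    (h : i ≤ j) : ko P (gperm P i) (gperm P j) := by
  rw [gperm_apply, gperm_apply]
  exact (slist_sorted P).rel_get_of_le (by simpa using h)


section Key
variable {P : Finpartition (Finset.univ : Finset (Fin n))}

lemma hd_idem (P : Finpartition (Finset.univ : Finset (Fin n))) (v : Fin n) :
    hd P (hd P v) = hd P v := hd_eq_of_part_eq (part_hd P v)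

lemma hd_step {i j : Fin n} (hij : (j:ℕ) = (i:ℕ)+1)
    (hne : hd P (gperm P i) ≠ hd P (gperm P j)) :
    hd P (gperm P j) < hd P (gperm P i) ∧ gperm P j = hd P (gperm P j) := by
  have hle : i ≤ j := by rw [Fin.le_def]; omega
  have hko := gperm_ko (P := P) hle
  have hdrop : hd P (gperm P j) < hd P (gperm P i) := by
    rcases hko with h | ⟨h, _⟩
    · exact h
    · exact absurd h hne
  refine ⟨hdrop, ?_⟩
  set h := hd P (gperm P j) with hh
  obtain ⟨u, hu⟩ := (gperm P).surjective h
  have hhd_u : hd P (gperm P u) = h := by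
    rw [hu, hh, hd_idem]
  rcases lt_trichotomy u j with hlt | heq | hgt
  · -- u ≤ i
    have hui : u ≤ i := by rw [Fin.le_def]; rw [Fin.lt_def] at hlt; omega
    have := ko_hd_le (gperm_ko (P := P) hui)
    rw [hhd_u] at this
    exact absurd (lt_of_lt_of_le hdrop this) (lt_irrefl _)
  · exact heq ▸ hu
  · have := gperm_ko (P := P) hgt.le
    rcases this with h2 | ⟨h2, h2'⟩
    · rw [hhd_u] at h2; exact absurd h2 (lt_irrefl _)
    · have := hd_le P (gperm P j)
      rw [← hh] at this
      rw [hu] at h2'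
      exact le_antisymm h2' this

lemma hd_eq_iff_asc {i j : Fin n} (hij : (j:ℕ) = (i:ℕ)+1) :
    hd P (gperm P i) = hd P (gperm P j) ↔ gperm P i < gperm P j := by
  constructor
  · intro h
    have hle : i ≤ j := by rw [Fin.le_def]; omega
    have hij' : i ≠ j := by intro e; rw [e] at hij; omega
    rcases gperm_ko (P := P) hle with h2 | ⟨_, h2⟩
    · rw [h] at h2; exact absurd h2 (lt_irrefl _)
    · exact lt_of_le_of_ne h2 (fun e => hij' ((gperm P).injective e))
  · intro hasc
    by_contra hne
    obtain ⟨hdrop, hown⟩ := hd_step hij hne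
    have : gperm P j < gperm P i := by
      rw [hown]; exact lt_of_lt_of_le hdrop (hd_le P _)
    exact absurd (this.trans hasc) (lt_irrefl _)


lemma gperm_avoids (P : Finpartition (Finset.univ : Finset (Fin n))) :
    occ_1_32 n (gperm P) = 0 := by
  unfold occ_1_32
  rw [Finset.card_eq_zero, Finset.filter_eq_empty_iff]
  rintro ⟨i, j, j2⟩ -
  rintro ⟨hij, hj2, h1, h2⟩
  have hne : hd P (gperm P j) ≠ hd P (gperm P j2) := by
    intro h
    exact absurd ((hd_eq_iff_asc hj2).mp h) (asymm h2)
  obtain ⟨hdrop, hown⟩ := hd_step hj2 hne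
  have hchain : hd P (gperm P j) ≤ hd P (gperm P i) := ko_hd_le (gperm_ko hij.le)
  have : gperm P j2 < gperm P i := by
    rw [hown]
    exact lt_of_lt_of_le hdrop (hchain.trans (hd_le P _))
  exact absurd (h1.trans this) (lt_irrefl _)

end Key


section SetoidSide

/-- ascent at position `t` (vacuously true out of range) -/
def ascAt (π : Equiv.Perm (Fin n)) (t : ℕ) : Prop :=
  ∀ (h : t + 1 < n), π ⟨t, Nat.lt_of_succ_lt h⟩ < π ⟨t + 1, h⟩

instance (π : Equiv.Perm (Fin n)) (t : ℕ) : Decidable (ascAt π t) := by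
  unfold ascAt
  by_cases h : t + 1 < n
  · exact decidable_of_iff (π ⟨t, Nat.lt_of_succ_lt h⟩ < π ⟨t + 1, h⟩)
      ⟨fun hlt _ => hlt, fun H => H h⟩
  · exact isTrue (fun h' => absurd h' h)

/-- position of a value -/
def pos (π : Equiv.Perm (Fin n)) (v : Fin n) : ℕ := (π.symm v : ℕ)

/-- same increasing run -/
def rel (π : Equiv.Perm (Fin n)) (a b : Fin n) : Prop :=
  ∀ t : ℕ, min (pos π a) (pos π b) ≤ t → t + 1 ≤ max (pos π a) (pos π b) → ascAt π t

instance (π : Equiv.Perm (Fin n)) : DecidableRel (rel π) := fun a b =>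
  decidable_of_iff (∀ t, t < n → min (pos π a) (pos π b) ≤ t →
      t + 1 ≤ max (pos π a) (pos π b) → ascAt π t) (by
    constructor
    · intro H t h1 h2
      have hb : pos π b < n := (π.symm b).isLt
      have ha : pos π a < n := (π.symm a).isLt
      exact H t (by omega) h1 h2
    · intro H t _ h1 h2
      exact H t h1 h2)

/-- the setoid whose classes are the maximal increasing runs -/
def pSetoid (π : Equiv.Perm (Fin n)) : Setoid (Fin n) where
  r := rel π
  iseqv := by
    constructor
    · intro a t h1 h2
      simp only [min_self, max_self] at h1 h2
      omega
    · intro a b h t h1 h2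
      rw [min_comm, max_comm] at *
      exact h t h1 h2
    · intro a b c hab hbc t h1 h2
      rcases (by omega :
          (min (pos π a) (pos π b) ≤ t ∧ t + 1 ≤ max (pos π a) (pos π b)) ∨
          (min (pos π b) (pos π c) ≤ t ∧ t + 1 ≤ max (pos π b) (pos π c))) with
        ⟨u1, u2⟩ | ⟨u1, u2⟩
      · exact hab t u1 u2
      · exact hbc t u1 u2

instance (π : Equiv.Perm (Fin n)) : DecidableRel (pSetoid π).r :=
  (inferInstance : DecidableRel (rel π))

/-- partition into maximal increasing runs -/
def fpart (π : Equiv.Perm (Fin n)) : Finpartition (Finset.univ : Finset (Fin n)) :=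
  Finpartition.ofSetoid (pSetoid π)

lemma mem_fpart_part {π : Equiv.Perm (Fin n)} {a b : Fin n} :
    b ∈ (fpart π).part a ↔ rel π a b :=
  Finpartition.mem_part_ofSetoid_iff_rel

lemma asc_le (π : Equiv.Perm (Fin n)) :
    ∀ q (hq : q < n) (p) (hp : p < n), p ≤ q →
      (∀ t, p ≤ t → t + 1 ≤ q → ascAt π t) → π ⟨p, hp⟩ ≤ π ⟨q, hq⟩ := by
  intro q
  induction q with
  | zero =>
    intro hq p hp hpq _
    have : p = 0 := by omega
    subst this; exact le_refl _
  | succ q ih =>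
    intro hq p hp hpq hc
    rcases Nat.lt_or_ge p (q+1) with h | h
    · have h1 : π ⟨p, hp⟩ ≤ π ⟨q, by omega⟩ :=
        ih (by omega) p hp (by omega) (fun t ht1 ht2 => hc t ht1 (by omega))
      have h2 : π ⟨q, by omega⟩ < π ⟨q+1, hq⟩ := hc q (by omega) (by omega) hq
      exact h1.trans h2.le
    · have : p = q + 1 := by omega
      subst this; exact le_refl _

end SetoidSide


section Obligation4

variable {P : Finpartition (Finset.univ : Finset (Fin n))}

lemma pos_gperm (P : Finpartition (Finset.univ : Finset (Fin n))) (i : Fin n) :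
    pos (gperm P) (gperm P i) = (i : ℕ) := by
  simp [pos]

lemma rel_iff_aux {i j : Fin n} (hij : i ≤ j) :
    rel (gperm P) (gperm P i) (gperm P j) ↔ hd P (gperm P i) = hd P (gperm P j) := by
  have hij' : (i : ℕ) ≤ (j : ℕ) := hij
  constructor
  · intro hrel
    have key : ∀ t (h1 : (i:ℕ) ≤ t) (h2 : t ≤ (j:ℕ)),
        hd P (gperm P i) = hd P (gperm P ⟨t, lt_of_le_of_lt h2 j.isLt⟩) := by
      intro t h1
      induction t, h1 using Nat.le_induction with
      | base => intro h2; congr 1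
      | succ t ht ih =>
        intro h2
        have e1 := ih (by omega)
        have hasc : ascAt (gperm P) t := by
          apply hrel t <;> rw [pos_gperm, pos_gperm] <;> omega
        have hlt : t + 1 < n := lt_of_le_of_lt h2 j.isLt
        have := (hd_eq_iff_asc (P := P) (i := ⟨t, by omega⟩) (j := ⟨t+1, hlt⟩) rfl).mpr
          (hasc hlt)
        exact e1.trans this
    have := key (j : ℕ) hij' (le_refl _)
    simpa using this
  · intro hhd t h1 h2
    rw [pos_gperm, pos_gperm] at h1 h2
    replace h1 : (i:ℕ) ≤ t := by omega
    replace h2 : t + 1 ≤ (j:ℕ) := by omega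
    intro hlt
    apply (hd_eq_iff_asc (P := P) (i := ⟨t, by omega⟩) (j := ⟨t+1, hlt⟩) rfl).mp
    have l1 : hd P (gperm P ⟨t, by omega⟩) ≤ hd P (gperm P i) :=
      ko_hd_le (gperm_ko (by rw [Fin.le_def]; simpa using h1))
    have l2 : hd P (gperm P j) ≤ hd P (gperm P ⟨t+1, hlt⟩) :=
      ko_hd_le (gperm_ko (by rw [Fin.le_def]; simpa using h2))
    have l3 : hd P (gperm P ⟨t+1, hlt⟩) ≤ hd P (gperm P ⟨t, by omega⟩) :=
      ko_hd_le (gperm_ko (by rw [Fin.le_def]; simp))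
    exact le_antisymm (le_trans (le_trans l1 (le_of_eq hhd)) l2) l3

lemma rel_iff (i j : Fin n) :
    rel (gperm P) (gperm P i) (gperm P j) ↔ hd P (gperm P i) = hd P (gperm P j) := by
  rcases le_total i j with h | h
  · exact rel_iff_aux h
  · constructor
    · intro hr
      exact ((rel_iff_aux h).mp ((pSetoid (gperm P)).symm hr)).symm
    · intro hh
      exact (pSetoid (gperm P)).symm ((rel_iff_aux h).mpr hh.symm)

lemma part_F_eq (P : Finpartition (Finset.univ : Finset (Fin n))) (a : Fin n) :
    (fpart (gperm P)).part a = P.part a := by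
  ext b
  rw [mem_fpart_part]
  obtain ⟨i, rfl⟩ := (gperm P).surjective a
  obtain ⟨j, rfl⟩ := (gperm P).surjective b
  rw [rel_iff i j]
  constructor
  · intro h
    exact (part_eq_of_hd_eq h) ▸ P.mem_part (Finset.mem_univ _)
  · intro h
    apply hd_eq_of_part_eq
    exact (P.part_eq_of_mem (P.part_mem.2 (Finset.mem_univ _)) h).symm

lemma fpart_gperm (P : Finpartition (Finset.univ : Finset (Fin n))) :
    fpart (gperm P) = P := by
  apply Finpartition.ext
  ext p
  constructor
  · intro hp
    obtain ⟨a, ha⟩ := (fpart (gperm P)).nonempty_of_mem_parts hp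
    have : (fpart (gperm P)).part a = p := (fpart (gperm P)).part_eq_of_mem hp ha
    rw [← this, part_F_eq]
    exact P.part_mem.2 (Finset.mem_univ a)
  · intro hp
    obtain ⟨a, ha⟩ := P.nonempty_of_mem_parts hp
    have : P.part a = p := P.part_eq_of_mem hp ha
    rw [← this, ← part_F_eq]
    exact (fpart (gperm P)).part_mem.2 (Finset.mem_univ a)

end Obligation4


section Obligation3

variable {π : Equiv.Perm (Fin n)}

lemma avoid_spec (h : occ_1_32 n π = 0) :
    ∀ i j j2 : Fin n, i < j → (j2:ℕ) = (j:ℕ) + 1 → π j2 < π j → π j2 < π i := by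
  intro i j j2 hij hj2 hdesc
  unfold occ_1_32 at h
  rw [Finset.card_eq_zero, Finset.filter_eq_empty_iff] at h
  have := h (Finset.mem_univ (i, j, j2))
  push_neg at this
  have hni : ¬ π i < π j2 := by
    intro hc
    exact absurd hdesc (not_lt.mpr (this hij hj2 hc))
  have hne : π i ≠ π j2 := by
    intro e
    have : i = j2 := π.injective e
    subst this
    rw [Fin.lt_def] at hij; omega
  rcases lt_or_gt_of_ne hne with h' | h'
  · exact absurd h' hni
  · exact h'

lemma pos_apply (π : Equiv.Perm (Fin n)) (k : Fin n) : pos π (π k) = (k : ℕ) := by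
  simp [pos]

lemma pos_apply' (π : Equiv.Perm (Fin n)) (m : ℕ) (hm : m < n) :
    pos π (π ⟨m, hm⟩) = m := by
  simp [pos]

lemma hd_fpart_descent_bot {t : ℕ} (h1 : t + 1 < n)
    (hdesc : π ⟨t+1, h1⟩ < π ⟨t, by omega⟩) :
    hd (fpart π) (π ⟨t+1, h1⟩) = π ⟨t+1, h1⟩ := by
  refine le_antisymm (hd_le _ _) (Finset.le_min' _ _ _ ?_)
  intro b hb
  rw [mem_fpart_part] at hb
  have hbpos : pos π b < n := (π.symm b).isLt
  have hbval : π ⟨pos π b, hbpos⟩ = b := by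
    show π ⟨((π.symm b : Fin n) : ℕ), _⟩ = b
    exact π.apply_symm_apply b
  rcases Nat.lt_or_ge (pos π b) (t+1) with hlt | hge
  · exfalso
    have hasc : ascAt π t := by
      apply hb t <;> rw [pos_apply'] <;> omega
    exact absurd (hasc h1) (asymm hdesc)
  · have := asc_le π (pos π b) hbpos (t+1) h1 hge (by
      intro s hs1 hs2
      apply hb s <;> rw [pos_apply'] <;> omega)
    rw [hbval] at this
    exact this

lemma hd_fpart_descent_top (havoid : occ_1_32 n π = 0) {t : ℕ} (h1 : t + 1 < n)
    (hdesc : π ⟨t+1, h1⟩ < π ⟨t, by omega⟩) :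
    π ⟨t+1, h1⟩ < hd (fpart π) (π ⟨t, by omega⟩) := by
  set h := hd (fpart π) (π ⟨t, by omega⟩) with hh
  have hmem : h ∈ (fpart π).part (π ⟨t, by omega⟩) := hd_mem _ _
  rw [mem_fpart_part] at hmem
  have hppos : pos π h < n := (π.symm h).isLt
  have hpval : π ⟨pos π h, hppos⟩ = h := by
    show π ⟨((π.symm h : Fin n) : ℕ), _⟩ = h
    exact π.apply_symm_apply h
  rcases Nat.lt_or_ge (pos π h) (t+1) with hlt | hge
  · rcases Nat.lt_or_ge (pos π h) t with hlt' | hge'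
    · have := avoid_spec havoid ⟨pos π h, hppos⟩ ⟨t, by omega⟩ ⟨t+1, h1⟩
        (by rw [Fin.lt_def]; exact hlt') rfl hdesc
      rw [hpval] at this
      exact this
    · have he : pos π h = t := by omega
      have he2 : h = π ⟨t, by omega⟩ :=
        hpval.symm.trans (congrArg π (Fin.ext he))
      exact lt_of_lt_of_le hdesc (le_of_eq he2.symm)
  · exfalso
    have hasc : ascAt π t := by
      apply hmem t <;> rw [pos_apply'] <;> omega
    exact absurd (hasc h1) (asymm hdesc)

lemma ofFn_sorted (havoid : occ_1_32 n π = 0) :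
    (List.ofFn π).Pairwise (ko (fpart π)) := by
  rw [← List.isChain_iff_pairwise]
  rw [List.isChain_iff_getElem]
  intro t ht
  rw [List.length_ofFn] at ht
  have h1 : t + 1 < n := by omega
  simp only [List.getElem_ofFn]
  have hcast : ∀ (m : ℕ) (hm : m < n) (h' : m < (List.ofFn π).length),
      (Fin.cast (by simp) (⟨m, h'⟩ : Fin (List.ofFn π).length)) = (⟨m, hm⟩ : Fin n) := by
    intro m hm h'; rfl
  have hne : π ⟨t, by omega⟩ ≠ π ⟨t+1, h1⟩ := fun e =>
    absurd (π.injective e) (by simp [Fin.ext_iff])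
  rcases lt_or_gt_of_ne hne with hasc | hdesc
  · -- ascent: same part
    have hrel : rel π (π ⟨t, by omega⟩) (π ⟨t+1, h1⟩) := by
      intro s hs1 hs2
      rw [pos_apply, pos_apply] at hs1 hs2
      simp only [Fin.val_mk] at hs1 hs2
      have : s = t := by omega
      subst this
      intro h'
      exact hasc
    have hpart : (fpart π).part (π ⟨t+1, h1⟩) = (fpart π).part (π ⟨t, by omega⟩) :=
      (fpart π).part_eq_of_mem ((fpart π).part_mem.2 (Finset.mem_univ _))
        (mem_fpart_part.mpr hrel)
    exact Or.inr ⟨(hd_eq_of_part_eq hpart).symm, hasc.le⟩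
  · -- descent
    left
    rw [hd_fpart_descent_bot h1 hdesc]
    exact hd_fpart_descent_top havoid h1 hdesc

lemma slist_fpart (havoid : occ_1_32 n π = 0) :
    slist (fpart π) = List.ofFn π := by
  apply List.Perm.eq_of_pairwise' (slist_sorted _) (ofFn_sorted havoid)
  refine (slist_perm _).trans ?_
  rw [List.ofFn_eq_map]
  exact (Equiv.Perm.map_finRange_perm π).symm

lemma gperm_fpart (havoid : occ_1_32 n π = 0) :
    gperm (fpart π) = π := by
  apply Equiv.ext
  intro k
  rw [gperm_apply]
  have h := slist_fpart havoid
  rw [List.get_of_eq h, List.get_ofFn]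
  congr 1

end Obligation3

end Avoid132

theorem avoiding_1_32_eq_bell (n : ℕ) :
    ((Finset.univ : Finset (Equiv.Perm (Fin n))).filter
      (fun π => occ_1_32 n π = 0)).card = bell n := by
  rw [bell, ← Finset.card_univ]
  exact Finset.card_bij' (fun π _ => Avoid132.fpart π) (fun P _ => Avoid132.gperm P)
    (fun π _ => Finset.mem_univ _)
    (fun P _ => Finset.mem_filter.mpr ⟨Finset.mem_univ _, Avoid132.gperm_avoids P⟩)
    (fun π hπ => Avoid132.gperm_fpart ((Finset.mem_filter.mp hπ).2))
    (fun P _ => Avoid132.fpart_gperm P)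
end

section
/- The number of permutations of $\{1,\dots,n\}$ avoiding the generalized pattern $2\text{-}13$ equals the $n$th Catalan number $C_n = \frac{1}{n+1}\binom{2n}{n}$. -/
/-- Number of occurrences of the generalized pattern `2-13` in a permutation of `Fin n`:
triples of positions `i < j, j+1` with `π j < π i < π (j+1)`. -/
def occ_2_13 (n : ℕ) (π : Equiv.Perm (Fin n)) : ℕ :=
  ((Finset.univ : Finset (Fin n × Fin n × Fin n)).filter
    (fun p => p.1 < p.2.1 ∧ (p.2.2 : ℕ) = (p.2.1 : ℕ) + 1 ∧
      π p.2.1 < π p.1 ∧ π p.1 < π p.2.2)).card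

open List

def AvoidP (l : List ℕ) : Prop :=
  ∀ p q r : ℕ, [p, q, r] <+ l → q < p → p < r → False

lemma AvoidP.sublist {l l' : List ℕ} (h : l' <+ l) (hA : AvoidP l) : AvoidP l' :=
  fun p q r hs h1 h2 => hA p q r (hs.trans h) h1 h2

lemma avoid_decomp {σ τ : List ℕ} {m : ℕ}
    (hσ : ∀ x ∈ σ, m < x) (hτ : ∀ x ∈ τ, m < x)
    (hd : ∀ b ∈ σ, ∀ c ∈ τ, b ≠ c) :
    AvoidP (σ ++ m :: τ) ↔ AvoidP σ ∧ AvoidP τ ∧ ∀ b ∈ σ, ∀ c ∈ τ, c < b := by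
  constructor
  · intro hA
    refine ⟨hA.sublist (sublist_append_left _ _),
      hA.sublist ((sublist_cons_self m τ).trans (sublist_append_right _ _)), ?_⟩
    intro b hb c hc
    rcases lt_or_gt_of_ne (hd b hb c hc) with h | h
    · exact absurd h (by
        intro hbc
        exact hA b m c
          ((singleton_sublist.2 hb).append ((singleton_sublist.2 hc).cons₂ m))
          (hσ b hb) hbc)
    · exact h
  · rintro ⟨h1, h2, h3⟩ p q r hs hqp hpr
    rw [sublist_append_iff] at hs
    obtain ⟨x, y, hxy, hx, hy⟩ := hs
    rcases x with _ | ⟨a, _ | ⟨b, _ | ⟨c, _ | ⟨d, x⟩⟩⟩⟩ <;>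
      simp only [cons_append, nil_append, List.cons.injEq] at hxy
    · subst hxy
      rcases sublist_cons_iff.1 hy with h | ⟨rest, heq, hrest⟩
      · exact h2 p q r h hqp hpr
      · obtain ⟨rfl, hre⟩ : p = m ∧ [q, r] = rest := by simpa using heq
        subst hre
        have h5 := hτ q (hrest.subset (by simp))
        omega
    · obtain ⟨rfl, hxy⟩ := hxy
      subst hxy
      have hp : p ∈ σ := hx.subset (by simp)
      rcases sublist_cons_iff.1 hy with h | ⟨rest, heq, hrest⟩
      · have : r ∈ τ := h.subset (by simp)
        have := h3 p hp r this
        omega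
      · obtain ⟨rfl, hre⟩ : q = m ∧ [r] = rest := by simpa using heq
        subst hre
        have : r ∈ τ := hrest.subset (by simp)
        have := h3 p hp r this
        omega
    · obtain ⟨rfl, rfl, hxy⟩ := hxy
      subst hxy
      have hp : p ∈ σ := hx.subset (by simp)
      rcases sublist_cons_iff.1 hy with h | ⟨rest, heq, hrest⟩
      · have : r ∈ τ := h.subset (by simp)
        have := h3 p hp r this
        omega
      · obtain ⟨rfl, -⟩ : r = m ∧ [] = rest := by simpa using heq
        have := hσ p hp
        omega
    · obtain ⟨rfl, rfl, rfl, hxy⟩ := hxy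
      exact h1 p q r hx hqp hpr
    · have := congrArg List.length hxy.2.2.2
      simp at this

lemma sublist_of_get (l : List ℕ) (i k m : Fin l.length) (h1 : i < k) (h2 : k < m) :
    [l.get i, l.get k, l.get m] <+ l := by
  apply List.sublist_iff_exists_fin_orderEmbedding_get_eq.mpr
  refine ⟨OrderEmbedding.ofStrictMono
    (fun x : Fin 3 => if x.val = 0 then i else if x.val = 1 then k else m) ?_, ?_⟩
  · intro a b hab
    fin_cases a <;> fin_cases b <;> simp_all <;> omega
  · intro ix
    fin_cases ix <;> simp

/-- gap-reduction: a classical 213 occurrence yields a vincular one -/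
lemma gap_reduce {n : ℕ} (π : Equiv.Perm (Fin n)) :
    ∀ d (i k m : Fin n), i < k → k < m → (m : ℕ) - (k : ℕ) ≤ d →
      π k < π i → π i < π m →
      ∃ (i' j' : Fin n) (h : (j' : ℕ) + 1 < n),
        i' < j' ∧ π j' < π i' ∧ π i' < π ⟨(j' : ℕ) + 1, h⟩ := by
  intro d
  induction d with
  | zero => intro i k m hik hkm hd _ _; exact absurd hd (by omega)
  | succ d IH =>
    intro i k m hik hkm hd h1 h2
    have hkn : (k : ℕ) + 1 < n := by omega
    by_cases he : (k : ℕ) + 1 = (m : ℕ)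
    · refine ⟨i, k, hkn, hik, h1, ?_⟩
      have : (⟨(k : ℕ) + 1, hkn⟩ : Fin n) = m := Fin.ext he
      rw [this]; exact h2
    · set k' : Fin n := ⟨(k : ℕ) + 1, hkn⟩ with hk'
      have hne : π k' ≠ π i := by
        intro h
        have : k' = i := π.injective h
        have : (k' : ℕ) = (i : ℕ) := congrArg Fin.val this
        simp [hk'] at this
        omega
      rcases lt_or_gt_of_ne hne with h | h
      · -- π k' < π i : recurse with (i, k', m)
        exact IH i k' m (by simp [hk', Fin.lt_def]; omega)
          (by simp [hk', Fin.lt_def]; omega) (by simp [hk']; omega) h h2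
      · -- π i < π k' : vincular occurrence at (i, k, k+1)
        exact ⟨i, k, hkn, hik, h1, h⟩

lemma occ_zero_iff_avoid {n : ℕ} (π : Equiv.Perm (Fin n)) :
    occ_2_13 n π = 0 ↔ AvoidP (List.ofFn (fun i => ((π i : ℕ)))) := by
  rw [occ_2_13, Finset.card_eq_zero, Finset.filter_eq_empty_iff]
  constructor
  · -- no vincular occurrence → avoids classical pattern
    intro h p q r hs hqp hpr
    rw [List.sublist_iff_exists_fin_orderEmbedding_get_eq] at hs
    obtain ⟨f, hf⟩ := hs
    have hlen : (List.ofFn (fun i : Fin n => ((π i : ℕ)))).length = n := by simp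
    set F : Fin 3 → Fin n := fun x => Fin.cast hlen (f (Fin.cast (by simp) x)) with hF
    have hget : ∀ x : Fin 3, [p, q, r].get (Fin.cast (by simp : (3:ℕ) = [p,q,r].length) x)
        = (π (F x) : ℕ) := by
      intro x
      rw [hf]
      simp only [hF, List.get_ofFn]
    have h0 : p = (π (F 0) : ℕ) := hget 0
    have h1 : q = (π (F 1) : ℕ) := hget 1
    have h2 : r = (π (F 2) : ℕ) := hget 2
    have hm : F 0 < F 1 ∧ F 1 < F 2 := by
      constructor <;> [skip; skip] <;>
        · simp only [hF, Fin.lt_def, Fin.coe_cast]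
          exact f.strictMono (by simp [Fin.lt_def])
    obtain ⟨i', j', hj, hij, hv1, hv2⟩ :=
      gap_reduce π ((F 2 : ℕ) - (F 1 : ℕ)) (F 0) (F 1) (F 2) hm.1 hm.2 le_rfl
        (by rw [h0, h1] at hqp; exact_mod_cast hqp)
        (by rw [h0, h2] at hpr; exact_mod_cast hpr)
    exact h (Finset.mem_univ ((i', j', ⟨(j' : ℕ) + 1, hj⟩) : Fin n × Fin n × Fin n))
      ⟨hij, by simp, hv1, hv2⟩
  · -- avoids → no vincular occurrence
    intro hA x _ hx
    obtain ⟨h1, h2, h3, h4⟩ := hx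
    have hlen : (List.ofFn (fun i : Fin n => ((π i : ℕ)))).length = n := by simp
    have hsub := sublist_of_get (List.ofFn (fun i : Fin n => ((π i : ℕ))))
      (Fin.cast hlen.symm x.1) (Fin.cast hlen.symm x.2.1) (Fin.cast hlen.symm x.2.2)
      (by simp only [Fin.lt_def, Fin.coe_cast]; exact h1)
      (by simp only [Fin.lt_def, Fin.coe_cast]; omega)
    simp only [List.get_ofFn] at hsub
    have e : ∀ y : Fin n, Fin.cast hlen (Fin.cast hlen.symm y) = y := fun y => rfl
    rw [e, e, e] at hsub
    exact hA _ _ _ hsub (by exact_mod_cast h3) (by exact_mod_cast h4)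

open Classical in
noncomputable def avPerms (base : List ℕ) : Finset (List ℕ) :=
  base.permutations.toFinset.filter AvoidP

lemma mem_avPerms {base l : List ℕ} : l ∈ avPerms base ↔ l ~ base ∧ AvoidP l := by
  simp [avPerms, List.mem_permutations]

lemma ofFn_perm_range {n : ℕ} (π : Equiv.Perm (Fin n)) :
    (List.ofFn (fun i => ((π i : ℕ)))) ~ List.range n := by
  apply List.perm_of_nodup_nodup_toFinset_eq
  · exact List.nodup_ofFn.mpr (fun a b h => π.injective (Fin.val_injective h))
  · exact List.nodup_range
  · ext x
    simp only [List.mem_toFinset, List.mem_ofFn, List.mem_range]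
    constructor
    · rintro ⟨i, rfl⟩; exact (π i).isLt
    · intro hx; exact ⟨π.symm ⟨x, hx⟩, by simp⟩

lemma card_avoiders (n : ℕ) :
    ((Finset.univ : Finset (Equiv.Perm (Fin n))).filter (fun π => occ_2_13 n π = 0)).card
      = (avPerms (List.range n)).card := by
  apply Finset.card_bij (fun π _ => List.ofFn (fun i => ((π i : ℕ))))
  · intro π hπ
    rw [Finset.mem_filter] at hπ
    exact mem_avPerms.mpr ⟨ofFn_perm_range π, (occ_zero_iff_avoid π).1 hπ.2⟩
  · intro π1 _ π2 _ h
    exact Equiv.ext fun i => Fin.val_injective (congrFun (List.ofFn_injective h) i)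
  · intro l hl
    obtain ⟨hp, hA⟩ := mem_avPerms.mp hl
    have hlen : l.length = n := by simpa using hp.length_eq
    have hnodup : l.Nodup := hp.nodup_iff.mpr List.nodup_range
    have hmem : ∀ i : Fin l.length, l.get i < n := by
      intro i
      have := hp.mem_iff.mp (l.get_mem i)
      simpa using this
    set f : Fin n → Fin n := fun i => ⟨l.get (Fin.cast hlen.symm i), hmem _⟩ with hf
    have hinj : Function.Injective f := by
      intro a b hab
      have h2 : l.get (Fin.cast hlen.symm a) = l.get (Fin.cast hlen.symm b) :=
        congrArg Fin.val hab
      have h3 := List.nodup_iff_injective_get.mp hnodup h2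
      have h4 := congrArg Fin.val h3
      simp only [Fin.coe_cast] at h4
      exact Fin.ext h4
    refine ⟨Equiv.ofBijective f (Finite.injective_iff_bijective.mp hinj), Finset.mem_filter.mpr ⟨Finset.mem_univ _, ?_⟩, ?_⟩
    · rw [occ_zero_iff_avoid]
      have : (List.ofFn fun i => ((Equiv.ofBijective f (Finite.injective_iff_bijective.mp hinj)) i : ℕ)) = l := by
        apply List.ext_get (by simp [hlen])
        intro m h1 h2
        simp [hf]
      rw [this]; exact hA
    · apply List.ext_get (by simp [hlen])
      intro m h1 h2
      simp [hf]

lemma avoid_nil : AvoidP [] := by intro p q r hs; simp at hs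


lemma avoid_map_add (s : ℕ) (l : List ℕ) : AvoidP (l.map (· + s)) ↔ AvoidP l := by
  constructor
  · intro h p q r hs hqp hpr
    exact h (p + s) (q + s) (r + s) (by simpa using hs.map (· + s)) (by omega) (by omega)
  · intro h p q r hs hqp hpr
    rw [List.sublist_map_iff] at hs
    obtain ⟨l', hl', heq⟩ := hs
    rcases l' with _ | ⟨a, _ | ⟨b, _ | ⟨c, _ | d⟩⟩⟩ <;> simp at heq
    obtain ⟨ha, hb, hc⟩ := heq
    exact h a b c hl' (by omega) (by omega)

lemma card_avPerms_shift (s k : ℕ) :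
    (avPerms ((List.range k).map (· + s))).card = (avPerms (List.range k)).card := by
  symm
  apply Finset.card_bij (fun l _ => l.map (· + s))
  · intro l hl
    obtain ⟨hp, hA⟩ := mem_avPerms.mp hl
    exact mem_avPerms.mpr ⟨hp.map _, (avoid_map_add s l).mpr hA⟩
  · intro l1 _ l2 _ h
    exact List.map_injective_iff.mpr (fun a b => by omega) h
  · intro l' hl'
    obtain ⟨hp, hA⟩ := mem_avPerms.mp hl'
    have hmem : ∀ x ∈ l', s ≤ x := by
      intro x hx
      have := hp.mem_iff.mp hx
      simp only [List.mem_map, List.mem_range] at this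
      omega
    have heq : (l'.map (· - s)).map (· + s) = l' := by
      rw [List.map_map]
      conv_rhs => rw [← List.map_id l']
      apply List.map_congr_left
      intro x hx
      have := hmem x hx
      simp; omega
    refine ⟨l'.map (· - s), mem_avPerms.mpr ⟨?_, ?_⟩, heq⟩
    · have h2 := hp.map (· - s)
      have h3 : ((List.range k).map (· + s)).map (· - s) = List.range k := by
        rw [List.map_map]
        conv_rhs => rw [← List.map_id (List.range k)]
        apply List.map_congr_left
        intro x _
        simp
      rwa [h3] at h2
    · rw [← avoid_map_add s, heq]; exact hA

lemma card_avPerms_zero : (avPerms (List.range 0)).card = 1 := by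
  have : avPerms (List.range 0) = {[]} := by
    ext l
    rw [mem_avPerms]
    simp only [List.range_zero, Finset.mem_singleton]
    constructor
    · rintro ⟨hp, -⟩; exact List.Perm.eq_nil hp
    · rintro rfl; exact ⟨List.Perm.refl _, avoid_nil⟩
  rw [this, Finset.card_singleton]

lemma decomp_unique : ∀ (σ1 : List ℕ) {τ1 σ2 τ2 : List ℕ}, 0 ∉ σ1 → 0 ∉ σ2 →
    σ1 ++ 0 :: τ1 = σ2 ++ 0 :: τ2 → σ1 = σ2 ∧ τ1 = τ2 := by
  intro σ1
  induction σ1 with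
  | nil =>
    intro τ1 σ2 τ2 _ h2 he
    cases σ2 with
    | nil => simpa using he
    | cons b σ2 =>
      exfalso
      rw [List.nil_append, List.cons_append] at he
      have : b = 0 := (List.head_eq_of_cons_eq he.symm)
      exact h2 (this ▸ (List.mem_cons_self : b ∈ b :: σ2))
  | cons a σ1 IH =>
    intro τ1 σ2 τ2 h1 h2 he
    cases σ2 with
    | nil =>
      exfalso
      rw [List.nil_append, List.cons_append] at he
      have : a = 0 := List.head_eq_of_cons_eq he
      exact h1 (this ▸ (List.mem_cons_self : a ∈ a :: σ1))
    | cons b σ2 =>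
      rw [List.cons_append, List.cons_append] at he
      have hab : a = b := List.head_eq_of_cons_eq he
      have ht : σ1 ++ 0 :: τ1 = σ2 ++ 0 :: τ2 := List.tail_eq_of_cons_eq he
      have h1' : 0 ∉ σ1 := fun h => h1 (List.mem_cons_of_mem _ h)
      have h2' : 0 ∉ σ2 := fun h => h2 (List.mem_cons_of_mem _ h)
      obtain ⟨e1, e2⟩ := IH h1' h2' ht
      exact ⟨by rw [hab, e1], e2⟩

lemma perm_parts (n t : ℕ) (ht : t ≤ n) :
    ((List.range (n - t)).map (· + (t + 1)) ++ 0 :: (List.range t).map (· + 1)) ~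
      List.range (n + 1) := by
  refine List.perm_middle.trans ?_
  rw [List.range_succ_eq_map]
  apply List.Perm.cons
  have key : (List.range n).map Nat.succ
      = (List.range t).map (· + 1) ++ (List.range (n - t)).map (· + (t + 1)) := by
    conv_lhs => rw [show n = t + (n - t) by omega]
    rw [List.range_add, List.map_append, List.map_map]
    congr 1
    all_goals first
      | rfl
      | (apply List.map_congr_left; intro x _;
         simp only [Function.comp_apply, Nat.succ_eq_add_one]; omega)
  rw [key]
  exact List.perm_append_comm

lemma nodup_shift (s k : ℕ) : ((List.range k).map (· + s)).Nodup :=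
  (List.nodup_range (n := k)).map (fun a b h => by omega)

lemma avPerms_succ_eq (n : ℕ) :
    avPerms (List.range (n + 1)) =
      (Finset.range (n + 1)).biUnion (fun t =>
        ((avPerms ((List.range (n - t)).map (· + (t + 1)))) ×ˢ
          (avPerms ((List.range t).map (· + 1)))).image
          (fun p => p.1 ++ 0 :: p.2)) := by
  ext l
  simp only [Finset.mem_biUnion, Finset.mem_image, Finset.mem_product, Finset.mem_range]
  constructor
  · intro hl
    obtain ⟨hp, hA⟩ := mem_avPerms.mp hl
    have h0 : 0 ∈ l := hp.mem_iff.mpr (by simp)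
    obtain ⟨σ, τ, rfl⟩ := List.append_of_mem h0
    have hnd : (σ ++ 0 :: τ).Nodup := hp.nodup_iff.mpr List.nodup_range
    rw [List.nodup_append] at hnd
    obtain ⟨hndσ, hndτ', hdisj⟩ := hnd
    have h0σ : 0 ∉ σ := fun h => hdisj 0 h 0 List.mem_cons_self rfl
    have h0τ : 0 ∉ τ := (List.nodup_cons.mp hndτ').1
    have hndτ : τ.Nodup := (List.nodup_cons.mp hndτ').2
    have hbound : ∀ x ∈ σ ++ 0 :: τ, x ≤ n := by
      intro x hx
      have := hp.mem_iff.mp hx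
      simp at this; omega
    have hσpos : ∀ x ∈ σ, 0 < x := by
      intro x hx
      have : x ≠ 0 := fun h => h0σ (h ▸ hx)
      omega
    have hτpos : ∀ x ∈ τ, 0 < x := by
      intro x hx
      have : x ≠ 0 := fun h => h0τ (h ▸ hx)
      omega
    have hd : ∀ b ∈ σ, ∀ c ∈ τ, b ≠ c :=
      fun b hb c hc => fun h => hdisj b hb c (List.mem_cons_of_mem 0 hc) h
    obtain ⟨hAσ, hAτ, hcross⟩ := (avoid_decomp hσpos hτpos hd).mp hA
    set t := τ.length with htdef
    have hlen : σ.length + τ.length = n := by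
      have := hp.length_eq
      simp at this
      omega
    have ht : t ≤ n := by omega
    have hσb : ∀ b ∈ σ, b ≤ n := fun b hb => hbound b (List.mem_append_left _ hb)
    have hτb : ∀ c ∈ τ, c ≤ n := fun c hc =>
      hbound c (List.mem_append_right _ (List.mem_cons_of_mem 0 hc))
    -- each c ∈ τ satisfies c ≤ t
    have hct : ∀ c ∈ τ, c ≤ t := by
      intro c hc
      have hsub : σ.toFinset ⊆ Finset.Ioc c n := by
        intro b hb
        rw [List.mem_toFinset] at hb
        rw [Finset.mem_Ioc]
        exact ⟨hcross b hb c hc, hσb b hb⟩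
      have hcard := Finset.card_le_card hsub
      rw [List.toFinset_card_of_nodup hndσ, Nat.card_Ioc] at hcard
      have := hτb c hc
      omega
    have hτperm : τ ~ (List.range t).map (· + 1) := by
      apply List.perm_of_nodup_nodup_toFinset_eq hndτ (nodup_shift 1 t)
      apply Finset.eq_of_subset_of_card_le
      · intro c hc
        rw [List.mem_toFinset] at hc ⊢
        simp only [List.mem_map, List.mem_range]
        have := hct c hc
        have := hτpos c hc
        exact ⟨c - 1, by omega, by omega⟩
      · rw [List.toFinset_card_of_nodup hndτ, List.toFinset_card_of_nodup (nodup_shift 1 t)]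
        simp
        omega
    have hσlow : ∀ b ∈ σ, t + 1 ≤ b := by
      intro b hb
      rcases Nat.eq_zero_or_pos t with h | h
      · have := hσpos b hb; omega
      · have htm : t ∈ τ := by
          rw [hτperm.mem_iff]
          simp only [List.mem_map, List.mem_range]
          exact ⟨t - 1, by omega, by omega⟩
        have := hcross b hb t htm
        omega
    have hσperm : σ ~ (List.range (n - t)).map (· + (t + 1)) := by
      apply List.perm_of_nodup_nodup_toFinset_eq hndσ (nodup_shift (t + 1) (n - t))
      apply Finset.eq_of_subset_of_card_le
      · intro b hb
        rw [List.mem_toFinset] at hb ⊢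
        simp only [List.mem_map, List.mem_range]
        have := hσlow b hb
        have := hσb b hb
        exact ⟨b - (t + 1), by omega, by omega⟩
      · rw [List.toFinset_card_of_nodup hndσ, List.toFinset_card_of_nodup (nodup_shift (t + 1) (n - t))]
        simp
        omega
    exact ⟨t, by omega, (σ, τ), ⟨mem_avPerms.mpr ⟨hσperm, hAσ⟩, mem_avPerms.mpr ⟨hτperm, hAτ⟩⟩, rfl⟩
  · rintro ⟨t, ht, ⟨σ, τ⟩, ⟨hσ, hτ⟩, rfl⟩
    obtain ⟨hσp, hAσ⟩ := mem_avPerms.mp hσ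
    obtain ⟨hτp, hAτ⟩ := mem_avPerms.mp hτ
    have hσmem : ∀ x ∈ σ, t + 1 ≤ x ∧ x ≤ n := by
      intro x hx
      have := hσp.mem_iff.mp hx
      simp only [List.mem_map, List.mem_range] at this
      omega
    have hτmem : ∀ x ∈ τ, 1 ≤ x ∧ x ≤ t := by
      intro x hx
      have := hτp.mem_iff.mp hx
      simp only [List.mem_map, List.mem_range] at this
      omega
    apply mem_avPerms.mpr
    constructor
    · exact (hσp.append (hτp.cons 0)).trans (perm_parts n t (by omega))
    · apply (avoid_decomp (fun x hx => (hσmem x hx).1.trans_lt' (by omega))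
        (fun x hx => (hτmem x hx).1.trans_lt' (by omega))
        (fun b hb c hc => by have := hσmem b hb; have := hτmem c hc; omega)).mpr
      exact ⟨hAσ, hAτ, fun b hb c hc => by have := hσmem b hb; have := hτmem c hc; omega⟩


noncomputable def cA (k : ℕ) : ℕ := (avPerms (List.range k)).card

lemma zero_not_mem_upper {t k : ℕ} {σ : List ℕ} (h : σ ~ (List.range k).map (· + (t + 1))) :
    0 ∉ σ := by
  intro h0
  have := h.mem_iff.mp h0
  simp only [List.mem_map, List.mem_range] at this
  omega

lemma cA_succ (n : ℕ) : cA (n + 1) = ∑ t ∈ Finset.range (n + 1), cA (n - t) * cA t := by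
  rw [cA, avPerms_succ_eq, Finset.card_biUnion]
  · apply Finset.sum_congr rfl
    intro t _
    rw [Finset.card_image_of_injOn, Finset.card_product, card_avPerms_shift, card_avPerms_shift]
    · rfl
    · rintro ⟨σ1, τ1⟩ h1 ⟨σ2, τ2⟩ h2 heq
      rw [Finset.mem_coe, Finset.mem_product] at h1 h2
      have n1 : 0 ∉ σ1 := zero_not_mem_upper (mem_avPerms.mp h1.1).1
      have n2 : 0 ∉ σ2 := zero_not_mem_upper (mem_avPerms.mp h2.1).1
      obtain ⟨e1, e2⟩ := decomp_unique σ1 n1 n2 heq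
      simp only [Prod.mk.injEq]
      exact ⟨e1, e2⟩
  · intro t1 h1 t2 h2 hne
    rw [Function.onFun, Finset.disjoint_left]
    intro l hl1 hl2
    simp only [Finset.mem_image, Finset.mem_product] at hl1 hl2
    obtain ⟨⟨σ1, τ1⟩, ⟨hm1, hm1'⟩, rfl⟩ := hl1
    obtain ⟨⟨σ2, τ2⟩, ⟨hm2, hm2'⟩, heq⟩ := hl2
    have n1 : 0 ∉ σ1 := zero_not_mem_upper (mem_avPerms.mp hm1).1
    have n2 : 0 ∉ σ2 := zero_not_mem_upper (mem_avPerms.mp hm2).1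
    obtain ⟨e1, e2⟩ := decomp_unique σ2 n2 n1 heq
    apply hne
    have l1 : τ1.length = t1 := by simpa using (mem_avPerms.mp hm1').1.length_eq
    have l2 : τ2.length = t2 := by simpa using (mem_avPerms.mp hm2').1.length_eq
    rw [← l1, ← l2]
    exact congrArg List.length e2.symm

lemma cA_eq_catalan : ∀ n, cA n = catalan n := by
  intro n
  induction n using Nat.strong_induction_on with
  | _ n IH =>
    match n with
    | 0 =>
      show (avPerms (List.range 0)).card = catalan 0
      rw [catalan_zero]
      exact card_avPerms_zero
    | (m + 1) =>
      rw [cA_succ, catalan_succ]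
      rw [Fin.sum_univ_eq_sum_range (fun i => catalan i * catalan (m - i)) (m + 1)]
      rw [← Finset.sum_range_reflect (fun i => catalan i * catalan (m - i)) (m + 1)]
      apply Finset.sum_congr rfl
      intro t ht
      rw [Finset.mem_range] at ht
      rw [IH (m - t) (by omega), IH t (by omega)]
      have h2 : m + 1 - 1 - t = m - t := by omega
      have h3 : m - (m - t) = t := by omega
      rw [h2, h3]

/-- The number of `2-13`-avoiding permutations of length `n` is the `n`th
Catalan number `C n = (1/(n+1)) * (2n choose n)`. -/
theorem avoiding_2_13_eq_catalan (n : ℕ) :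
    ((Finset.univ : Finset (Equiv.Perm (Fin n))).filter
      (fun π => occ_2_13 n π = 0)).card = Nat.choose (2 * n) n / (n + 1) := by
  rw [card_avoiders n]
  have h1 : (avPerms (List.range n)).card = cA n := rfl
  rw [h1, cA_eq_catalan, catalan_eq_centralBinom_div]
  rfl
end

section
/- Let $v_r(n;i)$ denote the number of permutations of $\{1,\dots,n\}$ beginning with the letter $i$ that contain exactly $r$ occurrences of the pattern $23\text{-}1$ (with $v_r = 0$ for $r<0$), and $v_r(n)$ the total over all $i$. Then for $n \ge 1$: $v_r(n;1) = v_r(n;n) = v_r(n-1)$, and for $2 \le i \le n-1$, $v_r(n;i) = \sum_{j=1}^{i-1} v_r(n-1;j) + \sum_{j=i}^{n-1} v_{r-i+1}(n-1;j)$. -/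
/-- Occurrences of `23-1`: positions `i, i+1 < j` with `π j < π i < π (i+1)`. -/
def occ_23_1 (n : ℕ) (π : Equiv.Perm (Fin n)) : ℕ :=
  ((Finset.univ : Finset (Fin n × Fin n × Fin n)).filter
    (fun p => (p.2.1 : ℕ) = (p.1 : ℕ) + 1 ∧ p.2.1 < p.2.2 ∧
      π p.2.2 < π p.1 ∧ π p.1 < π p.2.1)).card


/-- `v r n`: the number of permutations of length `n` with exactly `r` occurrences of
`23-1` (zero for `r < 0`). -/
def v (r : ℤ) (n : ℕ) : ℕ :=
  ((Finset.univ : Finset (Equiv.Perm (Fin n))).filter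
    (fun π => (occ_23_1 n π : ℤ) = r)).card

/-- `vI r n i`: the number of permutations of length `n` beginning with the letter `i`
(letters are `1, …, n`) having exactly `r` occurrences of `23-1` (zero for `r < 0`). -/
def vI (r : ℤ) (n i : ℕ) : ℕ :=
  if h : 0 < n then
    ((Finset.univ : Finset (Equiv.Perm (Fin n))).filter
      (fun π => (occ_23_1 n π : ℤ) = r ∧ (π ⟨0, h⟩ : ℕ) + 1 = i)).card
  else 0

open Equiv Finset

namespace VIRec

variable {m : ℕ}

def Phi (a : Fin (m+1)) (σ : Perm (Fin m)) : Perm (Fin (m+1)) :=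
  ((finSuccEquiv m).trans σ.optionCongr).trans (finSuccEquiv' a).symm

lemma Phi_zero (a : Fin (m+1)) (σ : Perm (Fin m)) : Phi a σ 0 = a := by
  simp [Phi]

lemma Phi_succ (a : Fin (m+1)) (σ : Perm (Fin m)) (x : Fin m) :
    Phi a σ x.succ = a.succAbove (σ x) := by
  simp [Phi]

lemma Phi_injective (a : Fin (m+1)) : Function.Injective (Phi a) := by
  intro σ τ h
  apply Equiv.optionCongr_injective
  ext x
  have h1 : ∀ ρ : Perm (Fin m), ρ.optionCongr x
      = finSuccEquiv' a (Phi a ρ ((finSuccEquiv m).symm x)) := by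
    intro ρ; simp [Phi]
  rw [h1 σ, h1 τ, h]

lemma Phi_surjective (a : Fin (m+1)) (π : Perm (Fin (m+1))) (h : π 0 = a) :
    ∃ σ, Phi a σ = π := by
  set e : Option (Fin m) ≃ Option (Fin m) :=
    ((finSuccEquiv m).symm.trans π).trans (finSuccEquiv' a) with he_def
  have he : e none = none := by
    simp [he_def, h, finSuccEquiv'_at]
  refine ⟨Equiv.removeNone e, ?_⟩
  have hoc : Equiv.optionCongr (Equiv.removeNone e) = e := by
    apply Equiv.ext; intro x
    cases x with
    | none => simp [he]
    | some y =>
      have h1 : ∃ z, e (some y) = some z := by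
        cases hx : e (some y) with
        | none =>
          exact absurd (e.injective (hx.trans he.symm)) (by simp)
        | some z => exact ⟨z, rfl⟩
      simp only [Equiv.optionCongr_apply, Option.map_some]
      exact (Equiv.removeNone_some _ h1)
  have : Phi a (Equiv.removeNone e) = ((finSuccEquiv m).trans e).trans (finSuccEquiv' a).symm := by
    rw [Phi, hoc]
  rw [this]
  ext y
  simp [he_def]

lemma card_filter_eq (a : Fin (m+1)) (P : Perm (Fin (m+1)) → Prop) [DecidablePred P] :
    (univ.filter (fun π : Perm (Fin (m+1)) => P π ∧ π 0 = a)).card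
      = (univ.filter (fun σ : Perm (Fin m) => P (Phi a σ))).card := by
  symm
  apply Finset.card_bij (fun σ _ => Phi a σ)
  · intro σ hσ
    simp only [mem_filter, mem_univ, true_and] at hσ ⊢
    exact ⟨hσ, Phi_zero a σ⟩
  · intro σ _ τ _ h
    exact Phi_injective a h
  · intro π hπ
    simp only [mem_filter, mem_univ, true_and] at hπ
    obtain ⟨σ, hσ⟩ := Phi_surjective a π hπ.2
    exact ⟨σ, by simp [mem_filter, hσ, hπ.1], hσ⟩


/-- The extra occurrences coming from position `0`. -/
def T (a : Fin (m+1)) (σ : Perm (Fin m)) : ℕ :=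
  (univ.filter (fun x : Fin (m+1) =>
    2 ≤ (x : ℕ) ∧ Phi a σ x < a ∧ a < Phi a σ 1)).card

lemma occ_Phi (a : Fin (m+1)) (σ : Perm (Fin m)) :
    occ_23_1 (m+1) (Phi a σ) = occ_23_1 m σ + T a σ := by
  classical
  rw [occ_23_1]
  rw [← Finset.card_filter_add_card_filter_not
    (p := fun p : Fin (m+1) × Fin (m+1) × Fin (m+1) => p.1 = 0)]
  rw [Nat.add_comm (occ_23_1 m σ)]
  congr 1
  · -- triples with first coordinate 0 give `T`
    rw [T]
    apply Finset.card_bij (fun p _ => p.2.2)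
    · rintro ⟨p1, p2, p3⟩ hp
      simp only [mem_filter, mem_univ, true_and] at hp ⊢
      obtain ⟨⟨hval, hlt, h31, h12⟩, h0⟩ := hp
      subst h0
      have hp2v : (p2 : ℕ) = 1 := by simpa using hval
      have h3big : 2 ≤ (p3 : ℕ) := by
        have := (Fin.lt_def.mp hlt); omega
      have hm2 : 2 ≤ m := by have := p3.isLt; omega
      have hp2 : p2 = (1 : Fin (m+1)) := by
        apply Fin.ext
        rw [Fin.val_one']
        have hmod : 1 % (m+1) = 1 := Nat.mod_eq_of_lt (by omega)
        omega
      rw [Phi_zero] at h31 h12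
      refine ⟨h3big, h31, ?_⟩
      rwa [hp2] at h12
    · rintro ⟨p1, p2, p3⟩ hp ⟨q1, q2, q3⟩ hq h
      simp only [mem_filter, mem_univ, true_and] at hp hq
      obtain ⟨⟨hval, hlt, _, _⟩, h0⟩ := hp
      obtain ⟨⟨hval', hlt', _, _⟩, h0'⟩ := hq
      simp only at h
      refine Prod.ext ?_ (Prod.ext ?_ h)
      · rw [h0, h0']
      · apply Fin.ext; rw [hval, hval', h0, h0']
    · intro x hx
      simp only [mem_filter, mem_univ, true_and] at hx
      obtain ⟨h2, hxa, ha1⟩ := hx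
      have hm2 : 2 ≤ m := by have := x.isLt; omega
      have hmod : 1 % (m+1) = 1 := Nat.mod_eq_of_lt (by omega)
      refine ⟨⟨0, 1, x⟩, Finset.mem_filter.mpr
        ⟨Finset.mem_filter.mpr ⟨mem_univ _, ?_, ?_, ?_, ?_⟩, rfl⟩, rfl⟩
      · rw [Fin.val_one', Fin.val_zero]; omega
      · rw [Fin.lt_def, Fin.val_one']
        simp only []
        omega
      · rwa [Phi_zero]
      · rwa [Phi_zero]
  · -- triples with first coordinate nonzero give `occ_23_1 m σ`
    rw [occ_23_1]
    symm
    apply Finset.card_bij (fun q _ => (q.1.succ, q.2.1.succ, q.2.2.succ))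
    · rintro ⟨q1, q2, q3⟩ hq
      simp only [mem_filter, mem_univ, true_and] at hq ⊢
      obtain ⟨hval, hlt, h31, h12⟩ := hq
      refine ⟨⟨?_, ?_, ?_, ?_⟩, Fin.succ_ne_zero _⟩
      · simp [Fin.val_succ, hval]
      · exact Fin.succ_lt_succ_iff.mpr hlt
      · simp only [Phi_succ]
        exact Fin.succAbove_lt_succAbove_iff.mpr h31
      · simp only [Phi_succ]
        exact Fin.succAbove_lt_succAbove_iff.mpr h12
    · rintro ⟨p1, p2, p3⟩ _ ⟨q1, q2, q3⟩ _ h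
      simp only [Prod.mk.injEq] at h
      exact Prod.ext (Fin.succ_injective _ h.1)
        (Prod.ext (Fin.succ_injective _ h.2.1) (Fin.succ_injective _ h.2.2))
    · rintro ⟨p1, p2, p3⟩ hp
      simp only [mem_filter, mem_univ, true_and] at hp
      obtain ⟨⟨hval, hlt, h31, h12⟩, h0⟩ := hp
      have h1 : p1 ≠ 0 := h0
      have h2 : p2 ≠ 0 := by
        intro h; rw [h] at hval; simp at hval
      have h3 : p3 ≠ 0 := by
        intro h; rw [h] at hlt
        exact absurd hlt (Fin.not_lt_zero _).elim
      obtain ⟨k1, rfl⟩ := Fin.eq_succ_of_ne_zero h1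
      obtain ⟨k2, rfl⟩ := Fin.eq_succ_of_ne_zero h2
      obtain ⟨k3, rfl⟩ := Fin.eq_succ_of_ne_zero h3
      refine ⟨⟨k1, k2, k3⟩, ?_, rfl⟩
      simp only [mem_filter, mem_univ, true_and]
      simp only [Phi_succ] at h31 h12
      refine ⟨?_, Fin.succ_lt_succ_iff.mp hlt,
        Fin.succAbove_lt_succAbove_iff.mp h31,
        Fin.succAbove_lt_succAbove_iff.mp h12⟩
      simp only [Fin.val_succ] at hval; omega

lemma T_zero_left (σ : Perm (Fin m)) : T (0 : Fin (m+1)) σ = 0 := by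
  rw [T, Finset.card_eq_zero]
  apply Finset.filter_false_of_mem
  intro x _
  rintro ⟨-, h, -⟩
  exact absurd h (Fin.not_lt_zero _)

lemma T_last (σ : Perm (Fin m)) : T (Fin.last m) σ = 0 := by
  rw [T, Finset.card_eq_zero]
  apply Finset.filter_false_of_mem
  intro x _
  rintro ⟨-, -, h⟩
  exact absurd h (Fin.le_last _).not_gt

lemma val_succAbove (a : Fin (m+1)) (j : Fin m) :
    ((a.succAbove j : Fin (m+1)) : ℕ) = if (j : ℕ) < (a : ℕ) then (j : ℕ) else (j : ℕ) + 1 := by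
  rcases lt_or_ge (Fin.castSucc j) a with h | h
  · rw [Fin.succAbove_of_castSucc_lt _ _ h, if_pos]
    · simp
    · simpa [Fin.lt_def] using h
  · rw [Fin.succAbove_of_le_castSucc _ _ h, if_neg]
    · simp
    · simpa [Fin.le_def] using h

lemma T_eq {k : ℕ} (a : Fin (k+2)) (σ : Perm (Fin (k+1))) :
    T a σ = if (a : ℕ) ≤ ((σ 0 : Fin (k+1)) : ℕ) then (a : ℕ) else 0 := by
  classical
  have h01 : (1 : Fin (k+2)) = Fin.succ (0 : Fin (k+1)) := by
    apply Fin.ext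
    rw [Fin.val_one', Fin.val_succ, Fin.val_zero]
    have : 1 % (k+2) = 1 := Nat.mod_eq_of_lt (by omega)
    omega
  have hPhi1 : Phi a σ 1 = a.succAbove (σ 0) := by rw [h01, Phi_succ]
  have hcmp : a < Phi a σ 1 ↔ (a : ℕ) ≤ ((σ 0 : Fin (k+1)) : ℕ) := by
    rw [hPhi1, Fin.lt_def, val_succAbove]
    split <;> omega
  by_cases hc : (a : ℕ) ≤ ((σ 0 : Fin (k+1)) : ℕ)
  · rw [if_pos hc]
    rw [T]
    have heq : (univ.filter (fun x : Fin (k+2) =>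
        2 ≤ (x : ℕ) ∧ Phi a σ x < a ∧ a < Phi a σ 1))
        = univ.filter (fun x : Fin (k+2) => Phi a σ x < a) := by
      ext x
      simp only [mem_filter, mem_univ, true_and]
      constructor
      · rintro ⟨-, h, -⟩; exact h
      · intro h
        refine ⟨?_, h, hcmp.mpr hc⟩
        have hx0 : x ≠ 0 := by
          rintro rfl
          rw [Phi_zero] at h
          exact lt_irrefl _ h
        have hx1 : x ≠ 1 := by
          rintro rfl
          exact absurd (h.trans (hcmp.mpr hc)) (lt_irrefl _)
        have hv0 : (x : ℕ) ≠ 0 := fun hc' => hx0 (Fin.ext hc')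
        have hv1 : (x : ℕ) ≠ 1 := by
          intro hc'
          apply hx1
          apply Fin.ext
          rw [Fin.val_one', hc']
          exact (Nat.mod_eq_of_lt (by omega)).symm
        omega
    rw [heq]
    have hbij : (univ.filter (fun x : Fin (k+2) => Phi a σ x < a)).card
        = (Finset.Iio a).card := by
      apply Finset.card_bij (fun x _ => Phi a σ x)
      · intro x hx
        simp only [mem_filter, mem_univ, true_and] at hx
        exact Finset.mem_Iio.mpr hx
      · intro x _ y _ h
        exact (Phi a σ).injective h
      · intro y hy
        refine ⟨(Phi a σ).symm y, ?_, by simp⟩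
        simp only [mem_filter, mem_univ, true_and, Equiv.apply_symm_apply]
        exact Finset.mem_Iio.mp hy
    rw [hbij, Fin.card_Iio]
  · rw [if_neg hc]
    rw [T, Finset.card_eq_zero]
    apply Finset.filter_false_of_mem
    intro x _
    rintro ⟨-, -, h⟩
    exact hc (hcmp.mp h)


lemma vI_eq (a : Fin (m+1)) (r : ℤ) :
    vI r (m+1) ((a : ℕ) + 1)
      = (univ.filter (fun σ : Perm (Fin m) =>
          (occ_23_1 m σ : ℤ) + (T a σ : ℤ) = r)).card := by
  classical
  rw [vI, dif_pos (Nat.succ_pos m)]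
  have h00 : (⟨0, Nat.succ_pos m⟩ : Fin (m+1)) = 0 := by
    apply Fin.ext; simp
  have hfil : (univ.filter (fun π : Perm (Fin (m+1)) =>
      (occ_23_1 (m+1) π : ℤ) = r ∧ ((π ⟨0, Nat.succ_pos m⟩ : Fin (m+1)) : ℕ) + 1 = (a : ℕ) + 1))
      = univ.filter (fun π : Perm (Fin (m+1)) =>
        ((occ_23_1 (m+1) π : ℤ) = r) ∧ π 0 = a) := by
    apply Finset.filter_congr
    intro π _
    rw [h00]
    constructor
    · rintro ⟨h1, h2⟩
      exact ⟨h1, Fin.ext (by omega)⟩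
    · rintro ⟨h1, h2⟩
      exact ⟨h1, by rw [h2]⟩
  rw [hfil, card_filter_eq a (fun π => (occ_23_1 (m+1) π : ℤ) = r)]
  congr 1
  apply Finset.filter_congr
  intro σ _
  rw [occ_Phi]
  push_cast
  constructor <;> intro h <;> linarith

end VIRec

open VIRec

/-- For `n ≥ 1`: `v_r(n;1) = v_r(n;n) = v_r(n-1)`, and for `2 ≤ i ≤ n-1`,
`v_r(n;i) = ∑_{j=1}^{i-1} v_r(n-1;j) + ∑_{j=i}^{n-1} v_{r-i+1}(n-1;j)`. -/
theorem vI_recurrence (r : ℤ) (n : ℕ) (hn : 1 ≤ n) :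
    vI r n 1 = v r (n - 1) ∧ vI r n n = v r (n - 1) ∧
    ∀ i : ℕ, 2 ≤ i → i ≤ n - 1 →
      vI r n i =
        (∑ j ∈ Finset.Icc 1 (i - 1), vI r (n - 1) j) +
        ∑ j ∈ Finset.Icc i (n - 1), vI (r - (i : ℤ) + 1) (n - 1) j := by
  classical
  obtain ⟨m, rfl⟩ : ∃ m, n = m + 1 := ⟨n - 1, by omega⟩
  simp only [Nat.add_sub_cancel]
  refine ⟨?_, ?_, ?_⟩
  · -- i = 1
    have h := vI_eq (0 : Fin (m+1)) r
    simp only [Fin.val_zero, Nat.zero_add, T_zero_left] at h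
    rw [h, v]
    congr 1
  · -- i = n
    have h := vI_eq (Fin.last m) r
    simp only [Fin.val_last, T_last] at h
    rw [h, v]
    congr 1
  · -- middle case
    intro i hi2 him
    obtain ⟨k, rfl⟩ : ∃ k, m = k + 1 := ⟨m - 1, by omega⟩
    have hik : i - 1 < k + 2 := by omega
    set a : Fin (k+2) := ⟨i - 1, hik⟩ with ha
    have hav : (a : ℕ) = i - 1 := rfl
    have hia : (a : ℕ) + 1 = i := by omega
    rw [show vI r (k+2) i = vI r (k+2) ((a : ℕ) + 1) from by rw [hia]]
    rw [vI_eq a r]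
    rw [← Finset.card_filter_add_card_filter_not
      (p := fun σ : Perm (Fin (k+1)) => (a : ℕ) ≤ ((σ 0 : Fin (k+1)) : ℕ))]
    rw [Nat.add_comm]
    congr 1
    · -- first letter of σ below a : sum over j from 1 to i-1
      rw [Finset.card_eq_sum_card_fiberwise
        (f := fun σ : Perm (Fin (k+1)) => ((σ 0 : Fin (k+1)) : ℕ) + 1)
        (t := Finset.Icc 1 (i - 1)) ?_]
      · apply Finset.sum_congr rfl
        intro j hj
        simp only [Finset.mem_Icc] at hj
        rw [vI, dif_pos (Nat.succ_pos k)]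
        have h00 : (⟨0, Nat.succ_pos k⟩ : Fin (k+1)) = 0 := by apply Fin.ext; simp
        rw [Finset.filter_filter, Finset.filter_filter]
        congr 1
        apply Finset.filter_congr
        intro σ _
        rw [h00, T_eq]
        constructor
        · rintro ⟨hA, hB, hC⟩
          rw [if_neg hB] at hA
          push_cast at hA
          exact ⟨by linarith, hC⟩
        · rintro ⟨hD, hC⟩
          have hB : ¬ (a : ℕ) ≤ ((σ 0 : Fin (k+1)) : ℕ) := by omega
          refine ⟨?_, hB, hC⟩
          rw [if_neg hB]
          push_cast
          linarith
      · intro σ hσ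
        simp only [mem_coe, mem_filter, mem_univ, true_and] at hσ
        have hB := hσ.2
        have hmem : ((σ 0 : Fin (k+1)) : ℕ) + 1 ∈ Finset.Icc 1 (i - 1) := by
          rw [Finset.mem_Icc]; omega
        exact hmem
    · -- first letter of σ at least a : sum over j from i to k+1
      rw [Finset.card_eq_sum_card_fiberwise
        (f := fun σ : Perm (Fin (k+1)) => ((σ 0 : Fin (k+1)) : ℕ) + 1)
        (t := Finset.Icc i (k+1)) ?_]
      · apply Finset.sum_congr rfl
        intro j hj
        simp only [Finset.mem_Icc] at hj
        rw [vI, dif_pos (Nat.succ_pos k)]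
        have h00 : (⟨0, Nat.succ_pos k⟩ : Fin (k+1)) = 0 := by apply Fin.ext; simp
        rw [Finset.filter_filter, Finset.filter_filter]
        congr 1
        apply Finset.filter_congr
        intro σ _
        rw [h00, T_eq]
        have hcast : ((a : ℕ) : ℤ) = (i : ℤ) - 1 := by omega
        constructor
        · rintro ⟨hA, hB, hC⟩
          rw [if_pos hB] at hA
          refine ⟨?_, hC⟩
          rw [hcast] at hA
          linarith
        · rintro ⟨hD, hC⟩
          have hB : (a : ℕ) ≤ ((σ 0 : Fin (k+1)) : ℕ) := by omega
          refine ⟨?_, hB, hC⟩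
          rw [if_pos hB, hcast]
          linarith
      · intro σ hσ
        simp only [mem_coe, mem_filter, mem_univ, true_and] at hσ
        have hB := hσ.2
        have hmem : ((σ 0 : Fin (k+1)) : ℕ) + 1 ∈ Finset.Icc i (k + 1) := by
          rw [Finset.mem_Icc]; omega
        exact hmem
end

section
/- Let $v_0(n;i)$ be the number of $23\text{-}1$-avoiding permutations of $\{1,\dots,n\}$ beginning with the letter $i$, and $v_0(n)$ the total number of $23\text{-}1$-avoiding permutations of length $n$. Then for $2 \le i \le n-1$, $v_0(n;i) = \sum_{j=0}^{i-2}\binom{i-2}{j} v_0(n-2-j)$. -/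
/-- `v0 n`: the number of `23-1`-avoiding permutations of length `n`. -/
def v0 (n : ℕ) : ℕ :=
  ((Finset.univ : Finset (Equiv.Perm (Fin n))).filter
    (fun π => occ_23_1 n π = 0)).card

/-- `v0I n i`: the number of `23-1`-avoiding permutations of length `n` beginning with
the letter `i` (letters are `1, …, n`). -/
def v0I (n i : ℕ) : ℕ :=
  if h : 0 < n then
    ((Finset.univ : Finset (Equiv.Perm (Fin n))).filter
      (fun π => occ_23_1 n π = 0 ∧ (π ⟨0, h⟩ : ℕ) + 1 = i)).card
  else 0

/-- value of `π` at natural position `k` (junk value `n` if out of range). -/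
def gfun (n : ℕ) (π : Equiv.Perm (Fin n)) : ℕ → ℕ :=
  fun k => if h : k < n then (π ⟨k, h⟩ : ℕ) else n

/-- no occurrence of 23-1 in the length-`n` word `g` -/
def NoOcc (n : ℕ) (g : ℕ → ℕ) : Prop :=
  ∀ a b : ℕ, a + 2 ≤ b → b < n → ¬(g b < g a ∧ g a < g (a + 1))

lemma gfun_lt (n : ℕ) (π : Equiv.Perm (Fin n)) {k : ℕ} (hk : k < n) : gfun n π k < n := by
  simp only [gfun, dif_pos hk]; exact (π ⟨k, hk⟩).isLt

lemma gfun_inj (n : ℕ) (π : Equiv.Perm (Fin n)) {k l : ℕ} (hk : k < n) (hl : l < n)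
    (h : gfun n π k = gfun n π l) : k = l := by
  simp only [gfun, dif_pos hk, dif_pos hl] at h
  have := π.injective (Fin.ext h)
  simpa using congrArg Fin.val this

lemma occ_eq_zero_iff (n : ℕ) (π : Equiv.Perm (Fin n)) :
    occ_23_1 n π = 0 ↔ NoOcc n (gfun n π) := by
  rw [occ_23_1, Finset.card_eq_zero, Finset.filter_eq_empty_iff]
  constructor
  · intro H a b hab hbn ⟨h1, h2⟩
    have han : a < n := by omega
    have han1 : a + 1 < n := by omega
    have := H (x := (⟨a, han⟩, ⟨a + 1, han1⟩, ⟨b, hbn⟩)) (Finset.mem_univ _)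
    simp only [gfun, dif_pos hbn, dif_pos han, dif_pos han1] at h1 h2
    apply this
    refine ⟨rfl, ?_, ?_, ?_⟩
    · exact Fin.mk_lt_mk.mpr (by omega)
    · exact Fin.lt_def.mpr h1
    · exact Fin.lt_def.mpr h2
  · intro H p _ ⟨h1, h2, h3, h4⟩
    refine H p.1 p.2.2 ?_ p.2.2.isLt ?_
    · have := Fin.lt_def.mp h2; omega
    · have e1 : (⟨(p.1 : ℕ), p.1.isLt⟩ : Fin n) = p.1 := rfl
      have hlt : (p.1 : ℕ) + 1 < n := h1 ▸ p.2.1.isLt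
      have e2 : (⟨(p.1 : ℕ) + 1, hlt⟩ : Fin n) = p.2.1 := Fin.ext h1.symm
      constructor
      · simp only [gfun, dif_pos p.2.2.isLt, dif_pos p.1.isLt]
        rw [show (⟨(p.2.2 : ℕ), p.2.2.isLt⟩ : Fin n) = p.2.2 from rfl, e1]
        exact Fin.lt_def.mp h3
      · simp only [gfun, dif_pos p.1.isLt, dif_pos hlt]
        rw [e1, e2]
        exact Fin.lt_def.mp h4

/-- position (as a natural number) of the value `0` in `π` -/
def posZ (n : ℕ) (π : Equiv.Perm (Fin n)) : ℕ := gfun n π⁻¹ 0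

lemma posZ_lt (n : ℕ) (π : Equiv.Perm (Fin n)) (hn : 0 < n) : posZ n π < n := gfun_lt n π⁻¹ hn

lemma gfun_posZ (n : ℕ) (π : Equiv.Perm (Fin n)) (hn : 0 < n) : gfun n π (posZ n π) = 0 := by
  have h1 : posZ n π = ((π⁻¹ ⟨0, hn⟩ : Fin n) : ℕ) := by simp [posZ, gfun, dif_pos hn]
  rw [h1]
  simp [gfun, (π⁻¹ (⟨0, hn⟩ : Fin n)).isLt, Fin.eta]

lemma gfun_ne_posZ (n : ℕ) (π : Equiv.Perm (Fin n)) (hn : 0 < n) {k : ℕ} (hk : k < n)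
    (hne : k ≠ posZ n π) : 0 < gfun n π k := by
  rcases Nat.eq_zero_or_pos (gfun n π k) |>.symm with h | h
  · exact h
  · exfalso; apply hne
    exact gfun_inj n π hk (posZ_lt n π hn) (by rw [h, gfun_posZ n π hn])

/-- prefix of an avoiding permutation is strictly decreasing up to the position of 0 -/
lemma prefix_dec (n : ℕ) (π : Equiv.Perm (Fin n)) (hn : 0 < n) (hav : NoOcc n (gfun n π)) :
    ∀ a b : ℕ, a < b → b ≤ posZ n π → gfun n π b < gfun n π a := by
  have hz := posZ_lt n π hn
  have step : ∀ a : ℕ, a + 1 ≤ posZ n π → gfun n π (a + 1) < gfun n π a := by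
    intro a ha
    rcases eq_or_lt_of_le ha with he | hlt
    · rw [he, gfun_posZ n π hn]
      exact gfun_ne_posZ n π hn (by omega) (by omega)
    · by_contra hc
      push_neg at hc
      have hne : gfun n π a ≠ gfun n π (a+1) := fun h => by
        have := gfun_inj n π (by omega) (by omega) h; omega
      refine hav a (posZ n π) (by omega) hz ⟨?_, lt_of_le_of_ne hc hne⟩
      rw [gfun_posZ n π hn]
      exact gfun_ne_posZ n π hn (by omega) (by omega)
  intro a b hab hbz
  obtain ⟨d, rfl⟩ : ∃ d, b = a + (d + 1) := ⟨b - a - 1, by omega⟩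
  clear hab
  induction d with
  | zero => exact step a hbz
  | succ d ih =>
      calc gfun n π (a + (d + 1 + 1)) < gfun n π (a + (d + 1)) := step (a + (d+1)) (by omega)
        _ < gfun n π a := ih (by omega)

def Cset (n i : ℕ) (S : Finset ℕ) : Finset ℕ :=
  (Finset.range n) \ insert 0 (insert (i - 1) S)

lemma mem_Cset {n i : ℕ} {S : Finset ℕ} {x : ℕ} :
    x ∈ Cset n i S ↔ x < n ∧ ¬x = 0 ∧ ¬x = i - 1 ∧ x ∉ S := by
  simp [Cset, and_assoc]

lemma zero_not_mem {i : ℕ} {S : Finset ℕ} (hS : S ⊆ Finset.Icc 1 (i - 2)) : 0 ∉ S := fun h => by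
  have := hS h; simp only [Finset.mem_Icc] at this; omega

lemma pred_not_mem {i : ℕ} {S : Finset ℕ} (h1 : 2 ≤ i) (hS : S ⊆ Finset.Icc 1 (i - 2)) :
    i - 1 ∉ S := fun h => by
  have := hS h; simp only [Finset.mem_Icc] at this; omega

lemma card_le {i : ℕ} {S : Finset ℕ} (hS : S ⊆ Finset.Icc 1 (i - 2)) : S.card ≤ i - 2 := by
  have := Finset.card_le_card hS
  simpa [Nat.card_Icc] using this

lemma Cset_card {n i : ℕ} {S : Finset ℕ} (h1 : 2 ≤ i) (h2 : i + 1 ≤ n)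
    (hS : S ⊆ Finset.Icc 1 (i - 2)) :
    (Cset n i S).card = n - 2 - S.card := by
  have hins : insert 0 (insert (i - 1) S) ⊆ Finset.range n := by
    intro x hx
    simp only [Finset.mem_insert] at hx
    rcases hx with rfl | rfl | hx
    · simp only [Finset.mem_range]; omega
    · simp only [Finset.mem_range]; omega
    · have := hS hx; simp only [Finset.mem_Icc] at this; simp only [Finset.mem_range]; omega
  have hcard : (insert 0 (insert (i - 1) S)).card = S.card + 2 := by
    rw [Finset.card_insert_of_notMem, Finset.card_insert_of_notMem (pred_not_mem h1 hS)]
    simp only [Finset.mem_insert]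
    push_neg
    exact ⟨by omega, zero_not_mem hS⟩
  rw [Cset, Finset.card_sdiff_of_subset hins, hcard, Finset.card_range]
  omega

def Fmap (n i : ℕ) (S : Finset ℕ) (hC : (Cset n i S).card = n - 2 - S.card)
    (σ : Equiv.Perm (Fin (n - 2 - S.card))) : ℕ → ℕ :=
  fun k =>
    if h0 : k = 0 then i - 1
    else if hk : k ≤ S.card then S.orderEmbOfFin rfl ⟨S.card - k, by omega⟩
    else if hk1 : k = S.card + 1 then 0
    else if hk2 : k < n then
      (Cset n i S).orderEmbOfFin hC (σ ⟨k - (S.card + 2), by omega⟩)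
    else n

section Fixed

variable {n i : ℕ} {S : Finset ℕ} {hC : (Cset n i S).card = n - 2 - S.card}
  {σ : Equiv.Perm (Fin (n - 2 - S.card))}

lemma Fmap_zero : Fmap n i S hC σ 0 = i - 1 := by simp [Fmap]

lemma Fmap_mid {k : ℕ} (h0 : k ≠ 0) (hk : k ≤ S.card) (pf : S.card - k < S.card) :
    Fmap n i S hC σ k = S.orderEmbOfFin rfl ⟨S.card - k, pf⟩ := by
  simp [Fmap, h0, hk]

lemma Fmap_mid_mem {k : ℕ} (h0 : k ≠ 0) (hk : k ≤ S.card) : Fmap n i S hC σ k ∈ S := by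
  rw [Fmap_mid h0 hk (by omega)]
  exact Finset.orderEmbOfFin_mem _ _ _

lemma Fmap_z : Fmap n i S hC σ (S.card + 1) = 0 := by
  simp [Fmap]

lemma Fmap_suf {k : ℕ} (hk : S.card + 2 ≤ k) (hkn : k < n)
    (pf : k - (S.card + 2) < n - 2 - S.card) :
    Fmap n i S hC σ k = (Cset n i S).orderEmbOfFin hC (σ ⟨k - (S.card + 2), pf⟩) := by
  rw [Fmap, dif_neg (by omega), dif_neg (by omega), dif_neg (by omega), dif_pos hkn]

lemma Fmap_suf_mem {k : ℕ} (hk : S.card + 2 ≤ k) (hkn : k < n) :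
    Fmap n i S hC σ k ∈ Cset n i S := by
  rw [Fmap_suf hk hkn (by omega)]
  exact Finset.orderEmbOfFin_mem _ _ _

end Fixed

section Fixed2

variable {n i : ℕ} {S : Finset ℕ} {hC : (Cset n i S).card = n - 2 - S.card}
  {σ : Equiv.Perm (Fin (n - 2 - S.card))}

lemma Fmap_lt (h1 : 2 ≤ i) (h2 : i + 1 ≤ n) (hS : S ⊆ Finset.Icc 1 (i - 2))
    {k : ℕ} (hk : k < n) : Fmap n i S hC σ k < n := by
  by_cases e0 : k = 0
  · subst e0; rw [Fmap_zero]; omega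
  by_cases e1 : k ≤ S.card
  · have := hS (Fmap_mid_mem (hC := hC) (σ := σ) e0 e1)
    simp only [Finset.mem_Icc] at this; omega
  by_cases e2 : k = S.card + 1
  · subst e2; rw [Fmap_z]; omega
  · have := mem_Cset.mp (Fmap_suf_mem (hC := hC) (σ := σ) (by omega) hk)
    exact this.1

lemma Fmap_injOn (h1 : 2 ≤ i) (h2 : i + 1 ≤ n) (hS : S ⊆ Finset.Icc 1 (i - 2))
    {k l : ℕ} (hk : k < n) (hl : l < n) (h : Fmap n i S hC σ k = Fmap n i S hC σ l) :
    k = l := by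
  have hclass : ∀ x : ℕ, x < n → x ≠ 0 → ¬(x ≤ S.card) → x ≠ S.card + 1 →
      Fmap n i S hC σ x ∈ Cset n i S := fun x hx a b c =>
    Fmap_suf_mem (by omega) hx
  by_cases k0 : k = 0 <;> by_cases l0 : l = 0
  · omega
  · exfalso; subst k0; rw [Fmap_zero] at h
    by_cases l1 : l ≤ S.card
    · exact pred_not_mem h1 hS (h ▸ Fmap_mid_mem l0 l1)
    by_cases l2 : l = S.card + 1
    · subst l2; rw [Fmap_z] at h; omega
    · have := mem_Cset.mp (hclass l hl l0 l1 l2); rw [← h] at this; tauto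
  · exfalso; subst l0; rw [Fmap_zero] at h
    by_cases k1 : k ≤ S.card
    · exact pred_not_mem h1 hS (h ▸ Fmap_mid_mem k0 k1)
    by_cases k2 : k = S.card + 1
    · subst k2; rw [Fmap_z] at h; omega
    · have := mem_Cset.mp (hclass k hk k0 k1 k2); rw [h] at this; tauto
  by_cases k1 : k ≤ S.card <;> by_cases l1 : l ≤ S.card
  · -- both in S-prefix
    rw [Fmap_mid k0 k1 (by omega), Fmap_mid l0 l1 (by omega)] at h
    have := (S.orderEmbOfFin rfl).injective h
    have := Fin.mk.injEq _ _ _ _ ▸ this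
    omega
  · exfalso
    have hmem := Fmap_mid_mem (hC := hC) (σ := σ) k0 k1
    by_cases l2 : l = S.card + 1
    · subst l2; rw [Fmap_z] at h; rw [h] at hmem; exact zero_not_mem hS hmem
    · have := mem_Cset.mp (hclass l hl l0 l1 l2); rw [← h] at this; tauto
  · exfalso
    have hmem := Fmap_mid_mem (hC := hC) (σ := σ) l0 l1
    by_cases k2 : k = S.card + 1
    · subst k2; rw [Fmap_z] at h; rw [← h] at hmem; exact zero_not_mem hS hmem
    · have := mem_Cset.mp (hclass k hk k0 k1 k2); rw [h] at this; tauto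
  by_cases k2 : k = S.card + 1 <;> by_cases l2 : l = S.card + 1
  · omega
  · exfalso; subst k2; rw [Fmap_z] at h
    have := mem_Cset.mp (hclass l hl l0 l1 l2); rw [← h] at this; tauto
  · exfalso; subst l2; rw [Fmap_z] at h
    have := mem_Cset.mp (hclass k hk k0 k1 k2); rw [h] at this; tauto
  · rw [Fmap_suf (by omega) hk (by omega), Fmap_suf (by omega) hl (by omega)] at h
    have := σ.injective (((Cset n i S).orderEmbOfFin hC).injective h)
    have := Fin.mk.injEq _ _ _ _ ▸ this
    omega

end Fixed2

/-- the set of values appearing strictly between position 0 and the position of value 0 -/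
def pre (n : ℕ) (π : Equiv.Perm (Fin n)) : Finset ℕ :=
  (Finset.Ioo 0 (posZ n π)).image (gfun n π)

noncomputable def Phi {n i : ℕ} {S : Finset ℕ} (h1 : 2 ≤ i) (h2 : i + 1 ≤ n)
    (hS : S ⊆ Finset.Icc 1 (i - 2)) (hC : (Cset n i S).card = n - 2 - S.card)
    (σ : Equiv.Perm (Fin (n - 2 - S.card))) : Equiv.Perm (Fin n) :=
  Equiv.ofBijective (fun k : Fin n => ⟨Fmap n i S hC σ k.val, Fmap_lt h1 h2 hS k.isLt⟩)
    (Finite.injective_iff_bijective.mp (fun a b hab =>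
      Fin.ext (Fmap_injOn h1 h2 hS a.isLt b.isLt (by
        simpa [Fin.mk.injEq] using congrArg Fin.val hab))))

section Fixed3

variable {n i : ℕ} {S : Finset ℕ} (h1 : 2 ≤ i) (h2 : i + 1 ≤ n)
  (hS : S ⊆ Finset.Icc 1 (i - 2)) (hC : (Cset n i S).card = n - 2 - S.card)
  (σ : Equiv.Perm (Fin (n - 2 - S.card)))

include h1 h2 hS

lemma gfun_Phi {k : ℕ} (hk : k < n) : gfun n (Phi h1 h2 hS hC σ) k = Fmap n i S hC σ k := by
  simp only [gfun, dif_pos hk]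
  rfl

lemma Phi_posZ : posZ n (Phi h1 h2 hS hC σ) = S.card + 1 := by
  have hj : S.card + 1 < n := by have := card_le hS; omega
  have hn : 0 < n := by omega
  have : (Phi h1 h2 hS hC σ)⁻¹ ⟨0, hn⟩ = ⟨S.card + 1, hj⟩ := by
    rw [Equiv.Perm.inv_def, Equiv.symm_apply_eq]
    apply Fin.ext
    have : ((Phi h1 h2 hS hC σ) ⟨S.card + 1, hj⟩ : ℕ) = Fmap n i S hC σ (S.card + 1) := rfl
    rw [this, Fmap_z]
  simp only [posZ, gfun, dif_pos hn]
  rw [show (⟨0, hn⟩ : Fin n) = ⟨0, hn⟩ from rfl] at this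
  rw [this]

lemma Phi_dec {a b : ℕ} (hab : a < b) (hb : b ≤ S.card + 1) :
    Fmap n i S hC σ b < Fmap n i S hC σ a := by
  have hSmem : ∀ x ∈ S, 1 ≤ x ∧ x ≤ i - 2 := fun x hx => by
    have := hS hx; simp only [Finset.mem_Icc] at this; exact this
  by_cases a0 : a = 0
  · subst a0; rw [Fmap_zero]
    by_cases b1 : b ≤ S.card
    · have := hSmem _ (Fmap_mid_mem (hC := hC) (σ := σ) (by omega) b1); omega
    · have hb2 : b = S.card + 1 := by omega
      subst hb2; rw [Fmap_z]; omega
  · have ha1 : a ≤ S.card := by omega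
    by_cases b1 : b ≤ S.card
    · rw [Fmap_mid a0 ha1 (by omega), Fmap_mid (by omega) b1 (by omega)]
      have := (S.orderEmbOfFin rfl).strictMono (show (⟨S.card - b, by omega⟩ : Fin S.card) <
        ⟨S.card - a, by omega⟩ from Fin.mk_lt_mk.mpr (by omega))
      exact this
    · have hb2 : b = S.card + 1 := by omega
      subst hb2; rw [Fmap_z]
      have := hSmem _ (Fmap_mid_mem (hC := hC) (σ := σ) a0 ha1); omega

lemma Phi_NoOcc (hσ : NoOcc (n - 2 - S.card) (gfun (n - 2 - S.card) σ)) :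
    NoOcc n (Fmap n i S hC σ) := by
  intro a b hab hbn ⟨hba, haa⟩
  by_cases a1 : a ≤ S.card
  · exact absurd haa (not_lt.mpr (le_of_lt (Phi_dec h1 h2 hS hC σ (by omega) (by omega))))
  by_cases a2 : a = S.card + 1
  · subst a2; rw [Fmap_z] at hba; omega
  · -- suffix case
    have ha : S.card + 2 ≤ a := by omega
    have hmn : S.card + 2 ≤ n := by have := card_le hS; omega
    have hbm : b - (S.card + 2) < n - 2 - S.card := by omega
    have ham : a - (S.card + 2) < n - 2 - S.card := by omega
    have ham1 : a + 1 - (S.card + 2) < n - 2 - S.card := by omega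
    rw [Fmap_suf (by omega) hbn hbm, Fmap_suf (by omega) (by omega) ham] at hba
    rw [Fmap_suf (by omega) (by omega) ham, Fmap_suf (by omega) (by omega) ham1] at haa
    have l1 : σ ⟨b - (S.card + 2), hbm⟩ < σ ⟨a - (S.card + 2), ham⟩ :=
      ((Cset n i S).orderEmbOfFin hC).lt_iff_lt.mp hba
    have l2 : σ ⟨a - (S.card + 2), ham⟩ < σ ⟨a + 1 - (S.card + 2), ham1⟩ :=
      ((Cset n i S).orderEmbOfFin hC).lt_iff_lt.mp haa
    refine hσ (a - (S.card + 2)) (b - (S.card + 2)) (by omega) hbm ⟨?_, ?_⟩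
    · simp only [gfun, dif_pos hbm, dif_pos ham]
      exact Fin.lt_def.mp l1
    · simp only [gfun, dif_pos ham, dif_pos (show a - (S.card+2) + 1 < n - 2 - S.card by omega)]
      have : (⟨a - (S.card + 2) + 1, by omega⟩ : Fin (n - 2 - S.card)) = ⟨a + 1 - (S.card + 2), ham1⟩ :=
        Fin.ext (show a - (S.card + 2) + 1 = a + 1 - (S.card + 2) by omega)
      rw [this]
      exact Fin.lt_def.mp l2

lemma Phi_pre : pre n (Phi h1 h2 hS hC σ) = S := by
  rw [pre, Phi_posZ h1 h2 hS hC σ]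
  apply Finset.Subset.antisymm
  · intro x hx
    simp only [Finset.mem_image, Finset.mem_Ioo] at hx
    obtain ⟨k, ⟨hk0, hk1⟩, rfl⟩ := hx
    rw [gfun_Phi h1 h2 hS hC σ (by have := card_le hS; omega)]
    exact Fmap_mid_mem (by omega) (by omega)
  · intro x hx
    have : x ∈ Set.range (S.orderEmbOfFin rfl) := by
      rw [Finset.range_orderEmbOfFin]; exact hx
    obtain ⟨t, ht⟩ := this
    simp only [Finset.mem_image, Finset.mem_Ioo]
    refine ⟨S.card - t.val, ⟨by omega, by omega⟩, ?_⟩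
    rw [gfun_Phi h1 h2 hS hC σ (by have := card_le hS; have := t.isLt; omega)]
    rw [Fmap_mid (by have := t.isLt; omega) (by omega) (by have := t.isLt; omega)]
    rw [← ht]
    congr 1
    exact Fin.ext (by simp only [Fin.val_mk]; have := t.isLt; omega)

end Fixed3

section Psi

variable {n i : ℕ} {S : Finset ℕ} (h1 : 2 ≤ i) (h2 : i + 1 ≤ n)
  (hS : S ⊆ Finset.Icc 1 (i - 2)) (hC : (Cset n i S).card = n - 2 - S.card)
  (π : Equiv.Perm (Fin n)) (hn : 0 < n) (hav : NoOcc n (gfun n π))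
  (hI : gfun n π 0 = i - 1) (hpre : pre n π = S)

include h1 hn hav hI hpre

lemma psi_posZ_pos : 0 < posZ n π := by
  rcases Nat.eq_zero_or_pos (posZ n π) with h | h
  · exfalso
    have := gfun_posZ n π hn
    rw [h, hI] at this
    omega
  · exact h

include h2 hS in
lemma psi_posZ : posZ n π = S.card + 1 := by
  have hzlt := posZ_lt n π hn
  have hzpos := psi_posZ_pos h1 π hn hav hI hpre
  have hinj : Set.InjOn (gfun n π) ↑(Finset.Ioo 0 (posZ n π)) := by
    intro a ha b hb hab
    simp only [Finset.coe_Ioo, Set.mem_Ioo] at ha hb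
    exact gfun_inj n π (by omega) (by omega) hab
  have hcard : (pre n π).card = posZ n π - 1 := by
    rw [pre, Finset.card_image_of_injOn hinj, Nat.card_Ioo]; omega
  rw [hpre] at hcard
  omega

include h2 hS in
lemma psi_prefix {k : ℕ} (hk0 : k ≠ 0) (hk : k ≤ S.card) (pf : S.card - k < S.card) :
    gfun n π k = S.orderEmbOfFin rfl ⟨S.card - k, pf⟩ := by
  have hz := psi_posZ h1 h2 hS π hn hav hI hpre
  have hzlt := posZ_lt n π hn
  have hf : (fun t : Fin S.card => gfun n π (S.card - t.val)) = S.orderEmbOfFin rfl := by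
    apply Finset.orderEmbOfFin_unique
    · intro t
      have hmem : gfun n π (S.card - t.val) ∈ pre n π := by
        rw [pre, hz]
        apply Finset.mem_image_of_mem
        simp only [Finset.mem_Ioo]
        have := t.isLt; omega
      rwa [hpre] at hmem
    · intro t1 t2 hlt
      have h12 : (t1 : ℕ) < (t2 : ℕ) := hlt
      have := t2.isLt
      exact prefix_dec n π hn hav (S.card - t2.val) (S.card - t1.val) (by omega) (by omega)
  have := congrFun hf ⟨S.card - k, pf⟩
  simp only at this
  rw [← this]
  congr 1
  omega

include h2 hS in
lemma psi_suffix_mem {k : ℕ} (hk : S.card + 2 ≤ k) (hkn : k < n) :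
    gfun n π k ∈ Cset n i S := by
  have hz := psi_posZ h1 h2 hS π hn hav hI hpre
  rw [mem_Cset]
  refine ⟨gfun_lt n π hkn, ?_, ?_, ?_⟩
  · have := gfun_ne_posZ n π hn hkn (by omega)
    omega
  · intro h
    rw [← hI] at h
    have := gfun_inj n π hkn (by omega) h
    omega
  · intro h
    rw [← hpre, pre, hz] at h
    simp only [Finset.mem_image, Finset.mem_Ioo] at h
    obtain ⟨k', ⟨hk1, hk2⟩, hk3⟩ := h
    have := gfun_inj n π (by omega) hkn hk3
    omega

end Psi

noncomputable def Psi {n i : ℕ} {S : Finset ℕ} (hC : (Cset n i S).card = n - 2 - S.card)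
    (π : Equiv.Perm (Fin n))
    (hmem : ∀ t : Fin (n - 2 - S.card), gfun n π (S.card + 2 + t.val) ∈ Cset n i S) :
    Equiv.Perm (Fin (n - 2 - S.card)) :=
  Equiv.ofBijective
    (fun t => ((Cset n i S).orderIsoOfFin hC).symm ⟨gfun n π (S.card + 2 + t.val), hmem t⟩)
    (Finite.injective_iff_bijective.mp (fun a b hab => by
      have := congrArg (fun x => (((Cset n i S).orderIsoOfFin hC) x : ℕ)) hab
      simp only [OrderIso.apply_symm_apply] at this
      have hval : gfun n π (S.card + 2 + a.val) = gfun n π (S.card + 2 + b.val) := this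
      have ha := a.isLt; have hb := b.isLt
      exact Fin.ext (by
        have := gfun_inj n π (by omega) (by omega) hval
        omega)))

lemma cemb_Psi {n i : ℕ} {S : Finset ℕ} (hC : (Cset n i S).card = n - 2 - S.card)
    (π : Equiv.Perm (Fin n))
    (hmem : ∀ t : Fin (n - 2 - S.card), gfun n π (S.card + 2 + t.val) ∈ Cset n i S)
    (t : Fin (n - 2 - S.card)) :
    (Cset n i S).orderEmbOfFin hC (Psi hC π hmem t) = gfun n π (S.card + 2 + t.val) := by
  have : Psi hC π hmem t
      = ((Cset n i S).orderIsoOfFin hC).symm ⟨gfun n π (S.card + 2 + t.val), hmem t⟩ := rfl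
  rw [this, ← Finset.coe_orderIsoOfFin_apply, OrderIso.apply_symm_apply]

lemma gfun_val {n : ℕ} (π : Equiv.Perm (Fin n)) (x : Fin n) : gfun n π x.val = (π x : ℕ) := by
  simp only [gfun, dif_pos x.isLt, Fin.eta]

lemma Psi_NoOcc {n i : ℕ} {S : Finset ℕ} (hC : (Cset n i S).card = n - 2 - S.card)
    (π : Equiv.Perm (Fin n))
    (hmem : ∀ t : Fin (n - 2 - S.card), gfun n π (S.card + 2 + t.val) ∈ Cset n i S)
    (hav : NoOcc n (gfun n π)) :
    NoOcc (n - 2 - S.card) (gfun (n - 2 - S.card) (Psi hC π hmem)) := by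
  intro a b hab hbm ⟨hba, haa⟩
  have ham : a < n - 2 - S.card := by omega
  have ham1 : a + 1 < n - 2 - S.card := by omega
  simp only [gfun, dif_pos hbm, dif_pos ham, dif_pos ham1] at hba haa
  have l1 : Psi hC π hmem ⟨b, hbm⟩ < Psi hC π hmem ⟨a, ham⟩ := Fin.lt_def.mpr hba
  have l2 : Psi hC π hmem ⟨a, ham⟩ < Psi hC π hmem ⟨a + 1, ham1⟩ := Fin.lt_def.mpr haa
  have e1 := ((Cset n i S).orderEmbOfFin hC).lt_iff_lt.mpr l1
  have e2 := ((Cset n i S).orderEmbOfFin hC).lt_iff_lt.mpr l2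
  rw [cemb_Psi hC π hmem, cemb_Psi hC π hmem] at e1 e2
  exact hav (S.card + 2 + a) (S.card + 2 + b) (by omega) (by omega) ⟨e1, e2⟩

lemma Phi_Psi {n i : ℕ} {S : Finset ℕ} (h1 : 2 ≤ i) (h2 : i + 1 ≤ n)
    (hS : S ⊆ Finset.Icc 1 (i - 2)) (hC : (Cset n i S).card = n - 2 - S.card)
    (π : Equiv.Perm (Fin n)) (hn : 0 < n) (hav : NoOcc n (gfun n π))
    (hI : gfun n π 0 = i - 1) (hpre : pre n π = S)
    (hmem : ∀ t : Fin (n - 2 - S.card), gfun n π (S.card + 2 + t.val) ∈ Cset n i S) :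
    Phi h1 h2 hS hC (Psi hC π hmem) = π := by
  apply Equiv.ext
  intro x
  apply Fin.ext
  have hL : ((Phi h1 h2 hS hC (Psi hC π hmem)) x : ℕ) = Fmap n i S hC (Psi hC π hmem) x.val := rfl
  rw [hL, ← gfun_val π x]
  have hx := x.isLt
  by_cases x0 : x.val = 0
  · rw [x0, Fmap_zero, hI]
  by_cases x1 : x.val ≤ S.card
  · rw [Fmap_mid x0 x1 (by omega), psi_prefix h1 h2 hS π hn hav hI hpre x0 x1 (by omega)]
  by_cases x2 : x.val = S.card + 1
  · rw [x2, Fmap_z]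
    have := gfun_posZ n π hn
    rw [psi_posZ h1 h2 hS π hn hav hI hpre] at this
    rw [this]
  · have hxk : S.card + 2 ≤ x.val := by omega
    rw [Fmap_suf hxk hx (by omega), cemb_Psi hC π hmem]
    congr 1
    simp only [Fin.val_mk]
    omega

lemma Psi_Phi {n i : ℕ} {S : Finset ℕ} (h1 : 2 ≤ i) (h2 : i + 1 ≤ n)
    (hS : S ⊆ Finset.Icc 1 (i - 2)) (hC : (Cset n i S).card = n - 2 - S.card)
    (σ : Equiv.Perm (Fin (n - 2 - S.card)))
    (hmem : ∀ t : Fin (n - 2 - S.card),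
      gfun n (Phi h1 h2 hS hC σ) (S.card + 2 + t.val) ∈ Cset n i S) :
    Psi hC (Phi h1 h2 hS hC σ) hmem = σ := by
  apply Equiv.ext
  intro t
  apply ((Cset n i S).orderEmbOfFin hC).injective
  rw [cemb_Psi]
  have ht := t.isLt
  have hlt : S.card + 2 + t.val < n := by have := card_le hS; omega
  rw [gfun_Phi h1 h2 hS hC σ hlt, Fmap_suf (by omega) hlt (by omega)]
  congr 1
  apply congrArg
  exact Fin.ext (by simp only [Fin.val_mk]; omega)

lemma fiber_card {n i : ℕ} (h1 : 2 ≤ i) (h2 : i + 1 ≤ n) (hn : 0 < n) {S : Finset ℕ}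
    (hS : S ⊆ Finset.Icc 1 (i - 2)) :
    (Finset.univ.filter (fun π : Equiv.Perm (Fin n) =>
      (occ_23_1 n π = 0 ∧ (π ⟨0, hn⟩ : ℕ) + 1 = i) ∧ pre n π = S)).card
      = v0 (n - 2 - S.card) := by
  classical
  have hC := Cset_card h1 h2 hS
  have key : ∀ π : Equiv.Perm (Fin n),
      ((occ_23_1 n π = 0 ∧ (π ⟨0, hn⟩ : ℕ) + 1 = i) ∧ pre n π = S) →
      NoOcc n (gfun n π) ∧ gfun n π 0 = i - 1 ∧ pre n π = S := by
    intro π ⟨⟨hocc, hval⟩, hpre⟩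
    refine ⟨(occ_eq_zero_iff n π).mp hocc, ?_, hpre⟩
    have : gfun n π 0 = (π ⟨0, hn⟩ : ℕ) := by simp [gfun, hn]
    omega
  have hmem : ∀ π : Equiv.Perm (Fin n),
      π ∈ (Finset.univ.filter (fun π : Equiv.Perm (Fin n) =>
        (occ_23_1 n π = 0 ∧ (π ⟨0, hn⟩ : ℕ) + 1 = i) ∧ pre n π = S)) →
      ∀ t : Fin (n - 2 - S.card), gfun n π (S.card + 2 + t.val) ∈ Cset n i S := by
    intro π hπ t
    obtain ⟨hav, hI, hpre⟩ := key π (Finset.mem_filter.mp hπ).2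
    exact psi_suffix_mem h1 h2 hS π hn hav hI hpre (by omega) (by have := t.isLt; omega)
  rw [v0]
  refine Finset.card_bij' (fun π hπ => Psi hC π (hmem π hπ))
    (fun σ _ => Phi h1 h2 hS hC σ) ?_ ?_ ?_ ?_
  · intro π hπ
    obtain ⟨hav, hI, hpre⟩ := key π (Finset.mem_filter.mp hπ).2
    simp only [Finset.mem_filter, Finset.mem_univ, true_and]
    rw [occ_eq_zero_iff]
    exact Psi_NoOcc hC π (hmem π hπ) hav
  · intro σ hσ
    simp only [Finset.mem_filter, Finset.mem_univ, true_and] at hσ ⊢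
    refine ⟨⟨?_, ?_⟩, ?_⟩
    · rw [occ_eq_zero_iff]
      have : NoOcc n (Fmap n i S hC σ) :=
        Phi_NoOcc h1 h2 hS hC σ ((occ_eq_zero_iff _ σ).mp hσ)
      intro a b hab hbn hocc
      refine this a b hab hbn ?_
      rwa [gfun_Phi h1 h2 hS hC σ (by omega), gfun_Phi h1 h2 hS hC σ (by omega),
        gfun_Phi h1 h2 hS hC σ (by omega)] at hocc
    · have : ((Phi h1 h2 hS hC σ) ⟨0, hn⟩ : ℕ) = Fmap n i S hC σ 0 := rfl
      rw [this, Fmap_zero]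
      omega
    · exact Phi_pre h1 h2 hS hC σ
  · intro π hπ
    obtain ⟨hav, hI, hpre⟩ := key π (Finset.mem_filter.mp hπ).2
    exact Phi_Psi h1 h2 hS hC π hn hav hI hpre (hmem π hπ)
  · intro σ hσ
    exact Psi_Phi h1 h2 hS hC σ _


/-- For `2 ≤ i ≤ n-1`: `v₀(n;i) = ∑_{j=0}^{i-2} (i-2 choose j) v₀(n-2-j)`. -/
theorem v0I_formula (n i : ℕ) (h1 : 2 ≤ i) (h2 : i ≤ n - 1) :
    v0I n i = ∑ j ∈ Finset.range (i - 1), Nat.choose (i - 2) j * v0 (n - 2 - j) := by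
  have h2' : i + 1 ≤ n := by omega
  have hn : 0 < n := by omega
  rw [v0I, dif_pos hn]
  have H : ∀ π ∈ (Finset.univ : Finset (Equiv.Perm (Fin n))).filter
      (fun π => occ_23_1 n π = 0 ∧ (π ⟨0, hn⟩ : ℕ) + 1 = i),
      pre n π ∈ (Finset.Icc 1 (i - 2)).powerset := by
    intro π hπ
    obtain ⟨-, hocc, hval⟩ := Finset.mem_filter.mp hπ
    have hav := (occ_eq_zero_iff n π).mp hocc
    have hI0 : gfun n π 0 = (π ⟨0, hn⟩ : ℕ) := by simp [gfun, hn]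
    rw [Finset.mem_powerset]
    intro x hx
    simp only [pre, Finset.mem_image, Finset.mem_Ioo] at hx
    obtain ⟨k, ⟨hk0, hkz⟩, rfl⟩ := hx
    have hzlt := posZ_lt n π hn
    have hlt : gfun n π k < gfun n π 0 := prefix_dec n π hn hav 0 k hk0 (by omega)
    have hpos : 0 < gfun n π k := gfun_ne_posZ n π hn (by omega) (by omega)
    simp only [Finset.mem_Icc]
    omega
  rw [Finset.card_eq_sum_card_fiberwise H]
  have step1 : ∀ S ∈ (Finset.Icc 1 (i - 2)).powerset,
      (((Finset.univ : Finset (Equiv.Perm (Fin n))).filter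
        (fun π => occ_23_1 n π = 0 ∧ (π ⟨0, hn⟩ : ℕ) + 1 = i)).filter
        (fun π => pre n π = S)).card = v0 (n - 2 - S.card) := by
    intro S hS
    rw [Finset.filter_filter]
    exact fiber_card h1 h2' hn (Finset.mem_powerset.mp hS)
  rw [Finset.sum_congr rfl step1]
  rw [Finset.sum_powerset]
  have hcard : (Finset.Icc 1 (i - 2)).card = i - 2 := by rw [Nat.card_Icc]; omega
  rw [hcard, show i - 2 + 1 = i - 1 by omega]
  apply Finset.sum_congr rfl
  intro j hj
  have step2 : ∀ S ∈ (Finset.Icc 1 (i - 2)).powersetCard j, v0 (n - 2 - S.card) = v0 (n - 2 - j) := by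
    intro S hS
    rw [(Finset.mem_powersetCard.mp hS).2]
  rw [Finset.sum_congr rfl step2, Finset.sum_const, Finset.card_powersetCard, hcard,
    smul_eq_mul]
end

section
/- For all $n \ge 0$, the number of $12\text{-}3$-avoiding permutations of $\{1,\dots,n\}$, denoted $u_0(n)$, satisfies $u_0(n) = u_0(n-1) + \sum_{i=0}^{n-2}\binom{n-2}{i} u_0(i+1)$ for $n \ge 2$, with $u_0(0)=u_0(1)=1$. -/
/-- Occurrences of `12-3`: positions `i, i+1 < j` with `π i < π (i+1) < π j`. -/
def occ_12_3 (n : ℕ) (π : Equiv.Perm (Fin n)) : ℕ :=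
  ((Finset.univ : Finset (Fin n × Fin n × Fin n)).filter
    (fun p => (p.2.1 : ℕ) = (p.1 : ℕ) + 1 ∧ p.2.1 < p.2.2 ∧
      π p.1 < π p.2.1 ∧ π p.2.1 < π p.2.2)).card

/-- `u0 n`: the number of `12-3`-avoiding permutations of length `n`. -/
def u0 (n : ℕ) : ℕ :=
  ((Finset.univ : Finset (Equiv.Perm (Fin n))).filter
    (fun π => occ_12_3 n π = 0)).card


/-- Boolean avoidance of 12-3 for lists. -/
def avB : List ℕ → Bool
  | x :: y :: t => ((!(decide (x < y))) || t.all (fun z => decide (z ≤ y))) && avB (y :: t)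
  | _ => true

@[simp] lemma avB_nil : avB [] = true := rfl
@[simp] lemma avB_single (x : ℕ) : avB [x] = true := rfl

lemma avB_cons_cons (x y : ℕ) (t : List ℕ) :
    avB (x :: y :: t) = true ↔ ((x < y → ∀ z ∈ t, z ≤ y) ∧ avB (y :: t) = true) := by
  simp [avB, Decidable.imp_iff_not_or]

/-- index-based avoidance with `getD`. -/
def idxAv (l : List ℕ) : Prop :=
  ∀ i j, j < l.length → i + 1 < j →
    ¬ (l.getD i 0 < l.getD (i+1) 0 ∧ l.getD (i+1) 0 < l.getD j 0)

lemma idxAv_cons (x : ℕ) (l : List ℕ) :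
    idxAv (x :: l) ↔
      ((∀ j, j < l.length → 1 ≤ j → ¬ (x < l.getD 0 0 ∧ l.getD 0 0 < l.getD j 0)) ∧ idxAv l) := by
  constructor
  · intro h
    refine ⟨fun j hj h1 hc => ?_, fun i j hj hij hc => ?_⟩
    · exact h 0 (j+1) (by simpa using hj) (by omega) (by simpa using hc)
    · exact h (i+1) (j+1) (by simpa using hj) (by omega) (by simpa using hc)
  · rintro ⟨h0, h⟩ i j hj hij hc
    match i, j, hj, hij with
    | 0, j+1, hj, hij =>
      exact h0 j (by simpa using hj) (by omega) (by simpa using hc)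
    | i+1, j+1, hj, hij =>
      exact h i j (by simpa using hj) (by omega) (by simpa using hc)

lemma avB_iff_idxAv (l : List ℕ) : avB l = true ↔ idxAv l := by
  induction l with
  | nil => simp [idxAv]
  | cons x l ih =>
    match l with
    | [] =>
      simp only [avB_single, true_iff]
      intro i j hj hij; simp at hj; omega
    | y :: t =>
      rw [avB_cons_cons, idxAv_cons, ih]
      constructor
      · rintro ⟨h1, h2⟩
        refine ⟨fun j hj h1j hc => ?_, h2⟩
        simp only [List.getD_cons_zero] at hc
        match j, h1j with
        | j+1, _ =>
          simp only [List.getD_cons_succ] at hc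
          simp only [List.length_cons] at hj
          have hjt : j < t.length := by omega
          rw [List.getD_eq_getElem t 0 hjt] at hc
          have := h1 hc.1 _ (List.getElem_mem hjt)
          omega
      · rintro ⟨h0, h2⟩
        refine ⟨fun hxy z hz => ?_, h2⟩
        obtain ⟨k, hk, rfl⟩ := List.mem_iff_getElem.mp hz
        by_contra hzy
        refine h0 (k+1) (by simp; omega) (by omega) ?_
        simp only [List.getD_cons_zero, List.getD_cons_succ]
        rw [List.getD_eq_getElem t 0 hk]
        exact ⟨hxy, by omega⟩

/-- avB is invariant under maps strictly monotone on the list elements. -/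
lemma avB_map (f : ℕ → ℕ) : ∀ (l : List ℕ), (∀ a ∈ l, ∀ b ∈ l, (a < b ↔ f a < f b)) →
    (avB (l.map f) = true ↔ avB l = true)
  | [] => by simp
  | [x] => by simp [avB]
  | x :: y :: t => by
    intro hmono
    have hx : x ∈ x :: y :: t := by simp
    have hy : y ∈ x :: y :: t := by simp
    rw [List.map_cons, List.map_cons, avB_cons_cons, avB_cons_cons]
    have ih := avB_map f (y :: t) (fun a ha b hb =>
      hmono a (List.mem_cons_of_mem _ ha) b (List.mem_cons_of_mem _ hb))
    rw [List.map_cons] at ih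
    rw [ih]
    have hle : ∀ a ∈ t, (a ≤ y ↔ f a ≤ f y) := by
      intro a ha
      have h1 := hmono y hy a (by simp [ha])
      have h2 := hmono a (by simp [ha]) y hy
      omega
    constructor
    · rintro ⟨h1, h2⟩
      refine ⟨fun hxy z hz => ?_, h2⟩
      exact (hle z hz).mpr (h1 ((hmono x hx y hy).mp hxy) (f z) (List.mem_map_of_mem (f := f) hz))
    · rintro ⟨h1, h2⟩
      refine ⟨fun hxy z hz => ?_, h2⟩
      simp only [List.mem_map] at hz
      obtain ⟨a, ha, rfl⟩ := hz
      exact (hle a ha).mp (h1 ((hmono x hx y hy).mpr hxy) a ha)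


/-- Decomposition around the maximum element. -/
lemma avB_decomp (M : ℕ) : ∀ (p q : List ℕ), (∀ x ∈ p, x < M) → (∀ x ∈ q, x < M) →
    p.Nodup →
    (avB (p ++ M :: q) = true ↔ p.Chain' (· > ·) ∧ avB q = true)
  | [], q => by
    intro _ hq _
    simp only [List.nil_append, List.Chain', List.isChain_nil, true_and]
    match q with
    | [] => simp
    | z :: t =>
      rw [avB_cons_cons]
      have : ¬ M < z := by have := hq z (by simp); omega
      simp [this]
  | [x], q => by
    intro hp hq _
    simp only [List.cons_append, List.nil_append]
    rw [avB_cons_cons]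
    have h0 := avB_decomp M [] q (by simp) hq (by simp)
    simp only [List.nil_append, List.Chain', List.isChain_nil, true_and] at h0
    rw [h0]
    simp only [List.Chain', List.isChain_singleton, true_and]
    constructor
    · rintro ⟨_, h⟩; exact h
    · rintro h
      exact ⟨fun _ z hz => le_of_lt (hq z hz), h⟩
  | x :: y :: p, q => by
    intro hp hq hnd
    have hyM : y < M := hp y (by simp)
    rw [List.cons_append, List.cons_append, avB_cons_cons, ← List.cons_append]
    have ih := avB_decomp M (y :: p) q (fun a ha => hp a (List.mem_cons_of_mem _ ha)) hq
      (hnd.of_cons)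
    rw [ih]; simp only [List.Chain', List.isChain_cons_cons]
    constructor
    · rintro ⟨h1, h2, h3⟩
      have hxy : ¬ x < y := by
        intro hxy
        have := h1 hxy M (by simp)
        omega
      have hne : x ≠ y := by simp at hnd; tauto
      exact ⟨⟨by omega, h2⟩, h3⟩
    · rintro ⟨⟨h1, h2⟩, h3⟩
      exact ⟨fun hxy => absurd hxy (by omega), h2, h3⟩

/-- Arrangements of a finset as a finset of lists. -/
def arr (s : Finset ℕ) : Finset (List ℕ) := (s.sort (·≤·)).permutations.toFinset

lemma mem_arr {s : Finset ℕ} {l : List ℕ} : l ∈ arr s ↔ l.Nodup ∧ l.toFinset = s := by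
  rw [arr, List.mem_toFinset, List.mem_permutations]
  constructor
  · intro h
    refine ⟨h.nodup_iff.mpr (s.sort_nodup _), ?_⟩
    rw [← Finset.sort_toFinset s (· ≤ ·)]
    exact List.toFinset_eq_of_perm _ _ h
  · rintro ⟨h1, h2⟩
    exact List.perm_of_nodup_nodup_toFinset_eq h1 (s.sort_nodup _)
      (by rw [h2, Finset.sort_toFinset])

/-- avoiding arrangements -/
def A (s : Finset ℕ) : Finset (List ℕ) := (arr s).filter (fun l => avB l = true)

def descList (T : Finset ℕ) : List ℕ := (T.sort (·≤·)).reverse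

lemma descList_nodup (T : Finset ℕ) : (descList T).Nodup := by
  rw [descList, List.nodup_reverse]; exact T.sort_nodup _

lemma descList_toFinset (T : Finset ℕ) : (descList T).toFinset = T := by
  rw [descList, List.toFinset_reverse, Finset.sort_toFinset]

lemma descList_sorted (T : Finset ℕ) : (descList T).Pairwise (· > ·) := by
  rw [descList, List.pairwise_reverse]
  exact ((T.pairwise_sort (· ≤ ·)).and (T.sort_nodup (· ≤ ·))).imp fun h => lt_of_le_of_ne h.1 h.2

lemma descList_chain (T : Finset ℕ) : (descList T).Chain' (· > ·) :=
  (descList_sorted T).isChain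

lemma eq_descList {p : List ℕ} {T : Finset ℕ} (hc : p.Chain' (· > ·)) (hnd : p.Nodup)
    (hT : p.toFinset = T) : p = descList T := by
  have hs : p.Pairwise (· > ·) := List.isChain_iff_pairwise.mp hc
  refine List.Perm.eq_of_pairwise (fun _ _ _ _ h1 h2 => absurd h1 (lt_asymm h2)) hs (descList_sorted T) ?_
  exact List.perm_of_nodup_nodup_toFinset_eq hnd (descList_nodup T)
    (by rw [hT, descList_toFinset])

lemma takeWhile_fact (M : ℕ) (q : List ℕ) : ∀ (p : List ℕ), (∀ x ∈ p, x ≠ M) →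
    (p ++ M :: q).takeWhile (· ≠ M) = p ∧ (p ++ M :: q).dropWhile (· ≠ M) = M :: q
  | [] => by intro _; simp [List.takeWhile, List.dropWhile]
  | x :: p => by
    intro h
    have hx : x ≠ M := h x (by simp)
    have ih := takeWhile_fact M q p (fun a ha => h a (by simp [ha]))
    have hd : decide (x ≠ M) = true := by simp [hx]
    rw [List.cons_append, List.takeWhile_cons, List.dropWhile_cons, hd]
    simp only [if_true]
    exact ⟨by rw [ih.1], by rw [ih.2]⟩

lemma lt_max'_of_mem_erase {s : Finset ℕ} (hs : s.Nonempty) {x : ℕ}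
    (hx : x ∈ s.erase (s.max' hs)) : x < s.max' hs := by
  rw [Finset.mem_erase] at hx
  exact lt_of_le_of_ne (s.le_max' x hx.2) hx.1

lemma mem_of_decomp (s : Finset ℕ) (hs : s.Nonempty) (T : Finset ℕ)
    (hT : T ⊆ s.erase (s.max' hs)) {q : List ℕ} (hq : q ∈ A (s.erase (s.max' hs) \ T)) :
    descList T ++ s.max' hs :: q ∈ A s ∧
      ((descList T ++ s.max' hs :: q).takeWhile (· ≠ s.max' hs)).toFinset = T := by
  set M := s.max' hs with hM
  obtain ⟨hq1, hq2⟩ := Finset.mem_filter.mp hq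
  obtain ⟨hqnd, hqfin⟩ := mem_arr.mp hq1
  have hpmem : ∀ x ∈ descList T, x ∈ s.erase M := by
    intro x hx
    exact hT (by rwa [← descList_toFinset T, List.mem_toFinset])
  have hqmem : ∀ x ∈ q, x ∈ s.erase M := by
    intro x hx
    have : x ∈ s.erase M \ T := by rwa [← hqfin, List.mem_toFinset]
    exact (Finset.mem_sdiff.mp this).1
  have hplt : ∀ x ∈ descList T, x < M := fun x hx => lt_max'_of_mem_erase hs (hpmem x hx)
  have hqlt : ∀ x ∈ q, x < M := fun x hx => lt_max'_of_mem_erase hs (hqmem x hx)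
  have hpne : ∀ x ∈ descList T, x ≠ M := fun x hx => Nat.ne_of_lt (hplt x hx)
  have htw := takeWhile_fact M q (descList T) hpne
  have hnd : (descList T ++ M :: q).Nodup := by
    rw [List.nodup_append]
    have hMq : M ∉ q := fun h => Nat.lt_irrefl M (hqlt M h)
    refine ⟨descList_nodup T, List.nodup_cons.mpr ⟨hMq, hqnd⟩, ?_⟩
    intro x hx y hx2 hxy
    subst hxy
    rcases List.mem_cons.mp hx2 with h | hx3
    · exact hpne x hx h
    · have h1 : x ∈ T := by rwa [← descList_toFinset T, List.mem_toFinset]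
      have h2 : x ∈ s.erase M \ T := by rwa [← hqfin, List.mem_toFinset]
      exact (Finset.mem_sdiff.mp h2).2 h1
  have hfin : (descList T ++ M :: q).toFinset = s := by
    ext x
    simp only [List.toFinset_append, List.toFinset_cons, Finset.mem_union, Finset.mem_insert,
      List.mem_toFinset, descList_toFinset, hqfin]
    constructor
    · rintro (h | rfl | h)
      · exact Finset.mem_of_mem_erase (hT h)
      · exact s.max'_mem hs
      · exact Finset.mem_of_mem_erase (Finset.mem_sdiff.mp h).1
    · intro hx
      by_cases hxM : x = M
      · exact Or.inr (Or.inl hxM)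
      · by_cases hxT : x ∈ T
        · exact Or.inl hxT
        · refine Or.inr (Or.inr ?_)
          exact Finset.mem_sdiff.mpr ⟨Finset.mem_erase.mpr ⟨hxM, hx⟩, hxT⟩
  have hav : avB (descList T ++ M :: q) = true := by
    rw [avB_decomp M (descList T) q hplt hqlt (descList_nodup T)]
    exact ⟨descList_chain T, hq2⟩
  refine ⟨Finset.mem_filter.mpr ⟨mem_arr.mpr ⟨hnd, hfin⟩, hav⟩, ?_⟩
  rw [htw.1, descList_toFinset]

lemma decomp_of_mem (s : Finset ℕ) (hs : s.Nonempty) {l : List ℕ} (hl : l ∈ A s) :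
    (l.takeWhile (· ≠ s.max' hs)).toFinset ⊆ s.erase (s.max' hs) ∧
      l = descList ((l.takeWhile (· ≠ s.max' hs)).toFinset) ++ s.max' hs ::
        (l.dropWhile (· ≠ s.max' hs)).tail ∧
      (l.dropWhile (· ≠ s.max' hs)).tail ∈
        A (s.erase (s.max' hs) \ (l.takeWhile (· ≠ s.max' hs)).toFinset) := by
  set M := s.max' hs with hM
  obtain ⟨hl1, hl2⟩ := Finset.mem_filter.mp hl
  obtain ⟨hnd, hfin⟩ := mem_arr.mp hl1
  have hMl : M ∈ l := by rw [← List.mem_toFinset, hfin]; exact s.max'_mem hs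
  obtain ⟨p, q, hpq⟩ := List.append_of_mem hMl
  subst hpq
  have hndpq := hnd
  rw [List.nodup_append] at hndpq
  obtain ⟨hpnd, hmqnd, hdisj⟩ := hndpq
  have hMp : ∀ x ∈ p, x ≠ M := fun x hx heq => hdisj x hx M (by simp) heq
  have htw := takeWhile_fact M q p hMp
  rw [htw.1, htw.2]
  simp only [List.tail_cons]
  have hplt : ∀ x ∈ p, x < M := by
    intro x hx
    refine lt_max'_of_mem_erase hs (Finset.mem_erase.mpr ⟨hMp x hx, ?_⟩)
    rw [← hfin, List.mem_toFinset]
    exact List.mem_append_left _ hx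
  have hMq : M ∉ q := (List.nodup_cons.mp hmqnd).1
  have hqnd : q.Nodup := (List.nodup_cons.mp hmqnd).2
  have hqlt : ∀ x ∈ q, x < M := by
    intro x hx
    refine lt_max'_of_mem_erase hs (Finset.mem_erase.mpr ⟨fun h => hMq (by rw [h] at hx; exact hx), ?_⟩)
    rw [← hfin, List.mem_toFinset]
    exact List.mem_append_right _ (List.mem_cons_of_mem _ hx)
  rw [avB_decomp M p q hplt hqlt hpnd] at hl2
  have hsub : p.toFinset ⊆ s.erase M := by
    intro x hx
    rw [List.mem_toFinset] at hx
    refine Finset.mem_erase.mpr ⟨hMp x hx, ?_⟩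
    rw [← hfin, List.mem_toFinset]
    exact List.mem_append_left _ hx
  refine ⟨hsub, ?_, ?_⟩
  · rw [← eq_descList hl2.1 hpnd rfl]
  · refine Finset.mem_filter.mpr ⟨mem_arr.mpr ⟨hqnd, ?_⟩, hl2.2⟩
    ext x
    simp only [Finset.mem_sdiff, Finset.mem_erase, List.mem_toFinset, ← hfin]
    constructor
    · intro hx
      refine ⟨⟨fun h => hMq (by rw [h] at hx; exact hx), List.mem_append_right _ (List.mem_cons_of_mem _ hx)⟩, ?_⟩
      exact fun hp => hdisj x hp x (List.mem_cons_of_mem _ hx) rfl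
    · rintro ⟨⟨hxM, hxl⟩, hxp⟩
      rcases List.mem_append.mp hxl with h | h
      · exact absurd h hxp
      · rcases List.mem_cons.mp h with h' | h'
        · exact absurd h' hxM
        · exact h'

lemma fiber_card_s19 (s : Finset ℕ) (hs : s.Nonempty) (T : Finset ℕ)
    (hT : T ∈ (s.erase (s.max' hs)).powerset) :
    ((A s).filter (fun l => (l.takeWhile (· ≠ s.max' hs)).toFinset = T)).card
      = (A ((s.erase (s.max' hs)) \ T)).card := by
  rw [Finset.mem_powerset] at hT
  set M := s.max' hs with hM
  refine Finset.card_bij' (fun l _ => (l.dropWhile (· ≠ M)).tail)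
    (fun q _ => descList T ++ M :: q) ?_ ?_ ?_ ?_
  · intro l hl
    obtain ⟨hl1, hl2⟩ := Finset.mem_filter.mp hl
    have h := decomp_of_mem s hs hl1
    rw [hl2] at h
    exact h.2.2
  · intro q hq
    exact Finset.mem_filter.mpr ⟨(mem_of_decomp s hs T hT hq).1, (mem_of_decomp s hs T hT hq).2⟩
  · intro l hl
    obtain ⟨hl1, hl2⟩ := Finset.mem_filter.mp hl
    have h := decomp_of_mem s hs hl1
    rw [hl2] at h
    exact h.2.1.symm
  · intro q hq
    have h := mem_of_decomp s hs T hT hq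
    have hpne : ∀ x ∈ descList T, x ≠ M := by
      intro x hx
      have : x ∈ s.erase M := hT (by rwa [← descList_toFinset T, List.mem_toFinset])
      exact Nat.ne_of_lt (lt_max'_of_mem_erase hs this)
    show ((descList T ++ M :: q).dropWhile (· ≠ M)).tail = q
    rw [(takeWhile_fact M q (descList T) hpne).2, List.tail_cons]

lemma A_card_step (s : Finset ℕ) (hs : s.Nonempty) :
    (A s).card = ∑ T ∈ (s.erase (s.max' hs)).powerset, (A ((s.erase (s.max' hs)) \ T)).card := by
  rw [Finset.card_eq_sum_card_fiberwise
    (f := fun l => (l.takeWhile (· ≠ s.max' hs)).toFinset)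
    (t := (s.erase (s.max' hs)).powerset) ?_]
  · exact Finset.sum_congr rfl (fun T hT => fiber_card_s19 s hs T hT)
  · intro l hl
    exact Finset.mem_powerset.mpr (decomp_of_mem s hs hl).1

/-- transfer along the order isomorphism between two finsets of the same size -/
noncomputable def tmap (n : ℕ) (s t : Finset ℕ) (hs : s.card = n) (ht : t.card = n) : ℕ → ℕ :=
  fun x => if hx : x ∈ s then (t.orderIsoOfFin ht ((s.orderIsoOfFin hs).symm ⟨x, hx⟩) : ℕ) else x

lemma tmap_mem {n : ℕ} (s t : Finset ℕ) (hs : s.card = n) (ht : t.card = n) {x : ℕ}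
    (hx : x ∈ s) : tmap n s t hs ht x ∈ t := by
  rw [tmap, dif_pos hx]
  exact (t.orderIsoOfFin ht _).2

lemma tmap_mono {n : ℕ} (s t : Finset ℕ) (hs : s.card = n) (ht : t.card = n) {a b : ℕ}
    (ha : a ∈ s) (hb : b ∈ s) : (a < b ↔ tmap n s t hs ht a < tmap n s t hs ht b) := by
  simp only [tmap, dif_pos ha, dif_pos hb, Subtype.coe_lt_coe, OrderIso.lt_iff_lt,
    Subtype.mk_lt_mk]

lemma tmap_inv {n : ℕ} (s t : Finset ℕ) (hs : s.card = n) (ht : t.card = n) {x : ℕ}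
    (hx : x ∈ s) : tmap n t s ht hs (tmap n s t hs ht x) = x := by
  have h1 : tmap n s t hs ht x ∈ t := tmap_mem s t hs ht hx
  simp only [tmap, dif_pos hx] at h1 ⊢
  rw [dif_pos h1]
  have h2 : (⟨(t.orderIsoOfFin ht ((s.orderIsoOfFin hs).symm ⟨x, hx⟩) : ℕ), h1⟩ :
      {y // y ∈ t}) = t.orderIsoOfFin ht ((s.orderIsoOfFin hs).symm ⟨x, hx⟩) := rfl
  rw [h2, OrderIso.symm_apply_apply, OrderIso.apply_symm_apply]

lemma A_card_eq (s t : Finset ℕ) (h : s.card = t.card) : (A s).card = (A t).card := by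
  have ht : t.card = s.card := h.symm
  set φ := tmap s.card s t rfl ht with hφ
  set ψ := tmap s.card t s ht rfl with hψ
  have key : ∀ (u v : Finset ℕ) (hu : u.card = s.card) (hv : v.card = s.card) (l : List ℕ),
      l ∈ A u → l.map (tmap s.card u v hu hv) ∈ A v := by
    intro u v hu hv l hl
    obtain ⟨hl1, hl2⟩ := Finset.mem_filter.mp hl
    obtain ⟨hnd, hfin⟩ := mem_arr.mp hl1
    have hmem : ∀ a ∈ l, a ∈ u := fun a ha => by rw [← hfin, List.mem_toFinset]; exact ha
    refine Finset.mem_filter.mpr ⟨mem_arr.mpr ⟨?_, ?_⟩, ?_⟩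
    · refine hnd.map_on ?_
      intro a ha b hb hab
      by_contra hne
      rcases Nat.lt_or_ge a b with hlt | hge
      · have := (tmap_mono u v hu hv (hmem a ha) (hmem b hb)).mp hlt
        omega
      · have hlt : b < a := by omega
        have := (tmap_mono u v hu hv (hmem b hb) (hmem a ha)).mp hlt
        omega
    · ext x
      rw [List.mem_toFinset, List.mem_map]
      constructor
      · rintro ⟨a, ha, rfl⟩
        exact tmap_mem u v hu hv (hmem a ha)
      · intro hxv
        refine ⟨tmap s.card v u hv hu x, ?_, tmap_inv v u hv hu hxv⟩
        rw [← List.mem_toFinset, hfin]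
        exact tmap_mem v u hv hu hxv
    · rw [avB_map _ l (fun a ha b hb => tmap_mono u v hu hv (hmem a ha) (hmem b hb))]
      exact hl2
  refine Finset.card_bij' (fun l _ => l.map φ) (fun l _ => l.map ψ) ?_ ?_ ?_ ?_
  · intro l hl; exact key s t rfl ht l hl
  · intro l hl; exact key t s ht rfl l hl
  · intro l hl
    obtain ⟨hl1, _⟩ := Finset.mem_filter.mp hl
    obtain ⟨_, hfin⟩ := mem_arr.mp hl1
    show (l.map φ).map ψ = l
    rw [List.map_map]
    have hc : ∀ a ∈ l, (ψ ∘ φ) a = id a := by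
      intro a ha
      exact tmap_inv s t rfl ht (by rw [← hfin, List.mem_toFinset]; exact ha)
    rw [List.map_congr_left hc, List.map_id]
  · intro l hl
    obtain ⟨hl1, _⟩ := Finset.mem_filter.mp hl
    obtain ⟨_, hfin⟩ := mem_arr.mp hl1
    show (l.map ψ).map φ = l
    rw [List.map_map]
    have hc : ∀ a ∈ l, (φ ∘ ψ) a = id a := by
      intro a ha
      exact tmap_inv t s ht rfl (by rw [← hfin, List.mem_toFinset]; exact ha)
    rw [List.map_congr_left hc, List.map_id]

/-- The number of avoiding arrangements of `{0, ..., n-1}`. -/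
noncomputable def uu (n : ℕ) : ℕ := (A (Finset.range n)).card

lemma A_card_eq_uu (s : Finset ℕ) : (A s).card = uu s.card := by
  rw [uu]
  exact A_card_eq s (Finset.range s.card) (by rw [Finset.card_range])

lemma range_succ_max' (n : ℕ) (h : (Finset.range (n+1)).Nonempty) :
    (Finset.range (n+1)).max' h = n := by
  refine le_antisymm ?_ ?_
  · have := Finset.max'_mem _ h
    rw [Finset.mem_range] at this
    omega
  · exact Finset.le_max' _ n (by simp)

lemma uu_succ (n : ℕ) : uu (n+1) = ∑ j ∈ Finset.range (n+1), n.choose j * uu (n - j) := by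
  have hne : (Finset.range (n+1)).Nonempty := ⟨0, by simp⟩
  have hmax := range_succ_max' n hne
  have herase : (Finset.range (n+1)).erase ((Finset.range (n+1)).max' hne) = Finset.range n := by
    rw [hmax, Finset.range_add_one, Finset.erase_insert (by simp)]
  rw [uu, A_card_step _ hne, herase]
  have h1 : ∀ T ∈ (Finset.range n).powerset,
      (A (Finset.range n \ T)).card = uu (n - T.card) := by
    intro T hT
    rw [Finset.mem_powerset] at hT
    rw [A_card_eq_uu, Finset.card_sdiff_of_subset hT, Finset.card_range]
  rw [Finset.sum_congr rfl h1, Finset.sum_powerset_apply_card (fun j => uu (n - j))]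
  rw [Finset.card_range]
  exact Finset.sum_congr rfl (fun j _ => by rw [smul_eq_mul])

lemma uu_succ' (n : ℕ) : uu (n+1) = ∑ j ∈ Finset.range (n+1), n.choose j * uu j := by
  rw [uu_succ]
  rw [← Finset.sum_range_reflect]
  refine Finset.sum_congr rfl (fun j hj => ?_)
  rw [Finset.mem_range] at hj
  have h1 : n + 1 - 1 - j = n - j := by omega
  have h2 : n - (n - j) = j := by omega
  rw [h1, h2, Nat.choose_symm (by omega)]

lemma getD_ofFn {n : ℕ} (f : Fin n → ℕ) (i : ℕ) (h : i < n) :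
    (List.ofFn f).getD i 0 = f ⟨i, h⟩ := by
  rw [List.getD_eq_getElem _ _ (by simpa using h), List.getElem_ofFn]

lemma occ_zero_iff (n : ℕ) (π : Equiv.Perm (Fin n)) :
    occ_12_3 n π = 0 ↔ idxAv (List.ofFn fun i => (π i : ℕ)) := by
  rw [occ_12_3, Finset.card_eq_zero, Finset.eq_empty_iff_forall_notMem]
  constructor
  · intro h i j hj hij hc
    rw [List.length_ofFn] at hj
    have hi1 : i + 1 < n := by omega
    have hi : i < n := by omega
    rw [getD_ofFn _ i hi, getD_ofFn _ (i+1) hi1, getD_ofFn _ j hj] at hc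
    refine h (⟨i, hi⟩, ⟨i+1, hi1⟩, ⟨j, hj⟩) ?_
    rw [Finset.mem_filter]
    refine ⟨Finset.mem_univ _, rfl, ?_, ?_, ?_⟩
    · rw [Fin.lt_def]; exact hij
    · rw [Fin.lt_def]; exact hc.1
    · rw [Fin.lt_def]; exact hc.2
  · intro h p hp
    rw [Finset.mem_filter] at hp
    obtain ⟨-, h1, h2, h3, h4⟩ := hp
    obtain ⟨a, b, c⟩ := p
    simp only at h1 h2 h3 h4
    refine h a c (by simpa using c.2) (by rw [← h1]; exact h2) ?_
    have ha : (a : ℕ) < n := a.2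
    have hb : (a : ℕ) + 1 < n := by rw [← h1]; exact b.2
    have hc : (c : ℕ) < n := c.2
    rw [getD_ofFn _ _ ha, getD_ofFn _ _ hb, getD_ofFn _ _ hc]
    have hab : (⟨(a : ℕ) + 1, hb⟩ : Fin n) = b := by
      apply Fin.ext; simp [h1]
    have hcc : (⟨(c : ℕ), hc⟩ : Fin n) = c := by apply Fin.ext; rfl
    have haa : (⟨(a : ℕ), ha⟩ : Fin n) = a := by apply Fin.ext; rfl
    rw [hab, hcc, haa]
    exact ⟨h3, h4⟩

lemma ofFn_mem_arr {n : ℕ} (π : Equiv.Perm (Fin n)) :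
    List.ofFn (fun i => (π i : ℕ)) ∈ arr (Finset.range n) := by
  refine mem_arr.mpr ⟨?_, ?_⟩
  · rw [List.nodup_ofFn]
    exact Fin.val_injective.comp π.injective
  · ext x
    simp only [List.mem_toFinset, List.mem_ofFn, Finset.mem_range, Set.mem_range]
    constructor
    · rintro ⟨k, rfl⟩; exact (π k).2
    · intro hx; exact ⟨π.symm ⟨x, hx⟩, by simp⟩

lemma u0_eq_uu (n : ℕ) : u0 n = uu n := by
  rw [u0, uu]
  refine Finset.card_bij (fun π _ => List.ofFn (fun i => (π i : ℕ))) ?_ ?_ ?_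
  · intro π hπ
    rw [Finset.mem_filter] at hπ
    refine Finset.mem_filter.mpr ⟨ofFn_mem_arr π, ?_⟩
    rw [avB_iff_idxAv, ← occ_zero_iff]
    exact hπ.2
  · intro π₁ h₁ π₂ h₂ heq
    have := List.ofFn_injective heq
    ext k
    exact congrFun this k
  · intro l hl
    obtain ⟨hl1, hl2⟩ := Finset.mem_filter.mp hl
    obtain ⟨hnd, hfin⟩ := mem_arr.mp hl1
    have hlen : l.length = n := by
      rw [← List.toFinset_card_of_nodup hnd, hfin, Finset.card_range]
    have hmem : ∀ i (h : i < l.length), l[i] < n := by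
      intro i h
      have : l[i] ∈ l.toFinset := List.mem_toFinset.mpr (List.getElem_mem h)
      rw [hfin, Finset.mem_range] at this
      exact this
    set f : Fin n → Fin n := fun k => ⟨l[(k : ℕ)]'(by omega), hmem _ (by omega)⟩ with hf
    have hinj : Function.Injective f := by
      intro a b hab
      have := (List.nodup_iff_injective_get.mp hnd)
      have h2 : l.get ⟨(a : ℕ), by omega⟩ = l.get ⟨(b : ℕ), by omega⟩ := by
        simpa [List.get_eq_getElem] using congrArg Fin.val hab
      have := this h2
      exact Fin.ext (by simpa using congrArg Fin.val this)
    have hbij : Function.Bijective f := Finite.injective_iff_bijective.mp hinj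
    refine ⟨Equiv.ofBijective f hbij, ?_, ?_⟩
    · refine Finset.mem_filter.mpr ⟨Finset.mem_univ _, ?_⟩
      rw [occ_zero_iff, ← avB_iff_idxAv]
      have : List.ofFn (fun i => ((Equiv.ofBijective f hbij) i : ℕ)) = l := by
        refine List.ext_getElem (by simp [hlen]) ?_
        intro i h1 h2
        simp [Equiv.ofBijective, hf]
      rw [this]
      exact hl2
    · refine List.ext_getElem (by simp [hlen]) ?_
      intro i h1 h2
      simp [Equiv.ofBijective, hf]

lemma u0_zero : u0 0 = 1 := by decide

lemma u0_one : u0 1 = 1 := by decide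

/-- `u₀ 0 = u₀ 1 = 1` and, for `n ≥ 2`,
`u₀(n) = u₀(n-1) + ∑_{i=0}^{n-2} (n-2 choose i) u₀(i+1)`. -/
theorem u0_recurrence :
    u0 0 = 1 ∧ u0 1 = 1 ∧
    ∀ n : ℕ, 2 ≤ n →
      u0 n = u0 (n - 1) + ∑ i ∈ Finset.range (n - 1), Nat.choose (n - 2) i * u0 (i + 1) := by
  refine ⟨u0_zero, u0_one, ?_⟩
  intro n hn
  obtain ⟨m, rfl⟩ : ∃ m, n = m + 2 := ⟨n - 2, by omega⟩
  have e1 : m + 2 - 1 = m + 1 := by omega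
  have e2 : m + 2 - 2 = m := by omega
  rw [e1, e2]
  simp only [u0_eq_uu]
  rw [uu_succ' (m+1), Finset.sum_range_succ' _ (m+1)]
  have step1 : ∀ i ∈ Finset.range (m+1),
      (m+1).choose (i+1) * uu (i+1) = m.choose i * uu (i+1) + m.choose (i+1) * uu (i+1) := by
    intro i _
    rw [Nat.choose_succ_succ, add_mul]
  rw [Finset.sum_congr rfl step1, Finset.sum_add_distrib]
  have step2 : uu (m+1) = ∑ i ∈ Finset.range (m+1), m.choose (i+1) * uu (i+1) + uu 0 := by
    rw [uu_succ' m, Finset.sum_range_succ' _ m]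
    congr 1
    · rw [Finset.sum_range_succ, Nat.choose_succ_self, zero_mul, add_zero]
    · simp
  rw [Nat.choose_zero_right, one_mul]
  omega
end
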